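/- arXiv:math/0107019 — 7 statements merged into one kernel-verified Lean document; each statement's English description precedes it below -/
import Mathlib

section
/- Let A be a commutative integral domain with fraction field K, F a finitely generated projective A-module, and F' a submodule of F. For a prime ideal p of A, let I(p) denote the image of the canonical map F'⊗_A k(p) → F⊗_A k(p), where k(p) is the residue field of A_p. Then dim_K(F'⊗_A K) equals the maximum over all primes p of dim_{k(p)} I(p). -/
open TensorProduct

set_option maxHeartbeats 1000000

/-- Residue field of `A` at a prime `p`. -/
noncomputable abbrev resField {A : Type*} [CommRing A] (p : PrimeSpectrum A) :=
  IsLocalRing.ResidueField (Localization.AtPrime p.asIdeal)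

/-- Over a local ring, a family of a finite free module whose reduction to the residue
field is linearly independent is itself linearly independent. -/
theorem aux_li {R : Type*} [CommRing R] [IsLocalRing R] {M : Type*} [AddCommGroup M]
    [Module R M] [Module.Finite R M] [Module.Free R M] {ι : Type*} (v : ι → M)
    (hv : LinearIndependent (IsLocalRing.ResidueField R)
      fun i => (1 : IsLocalRing.ResidueField R) ⊗ₜ[R] v i) :
    LinearIndependent R v := by
  classical
  set k := IsLocalRing.ResidueField R with hk
  set w : ι → k ⊗[R] M := fun i => (1 : k) ⊗ₜ[R] v i with hwdef
  have hinjw : Function.Injective w := hv.injective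
  have hs : LinearIndepOn k id (Set.range w) := (linearIndepOn_id_range_iff hinjw).mpr hv
  have hsub : Set.range w ⊆ hs.extend (Set.subset_univ _) := hs.subset_extend _
  have hsurj : Function.Surjective (TensorProduct.mk R k M 1) :=
    TensorProduct.mk_surjective R M k Ideal.Quotient.mk_surjective
  set t := hs.extend (Set.subset_univ _) with htdef
  have hex : ∀ j : t, ∃ x : M, (TensorProduct.mk R k M 1) x = (j : k ⊗[R] M) :=
    fun j => hsurj (j : k ⊗[R] M)
  set m : t → M := fun j =>
    if h : ∃ i, w i = (j : k ⊗[R] M) then v h.choose else (hex j).choose with hmdef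
  have hm : ∀ j : t, (1 : k) ⊗ₜ[R] m j = (j : k ⊗[R] M) := by
    intro j
    by_cases h : ∃ i, w i = (j : k ⊗[R] M)
    · simp only [hmdef, dif_pos h]
      exact h.choose_spec
    · simp only [hmdef, dif_neg h]
      exact (hex j).choose_spec
  have hspan : Submodule.span R (Set.range m) = ⊤ :=
    IsLocalRing.span_eq_top_of_tmul_eq_basis (R := R) (M := M) m (Module.Basis.extend hs)
      (fun j => by rw [Module.Basis.coe_extend]; exact hm j)
  let c := Module.Free.chooseBasis R M
  let σ : t ≃ Module.Free.ChooseBasisIndex R M := (Module.Basis.extend hs).indexEquiv (c.baseChange k)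
  let q : (t →₀ R) →ₗ[R] M := Finsupp.linearCombination R m
  have hq : Function.Surjective q := by
    rw [← LinearMap.range_eq_top, Finsupp.range_linearCombination, hspan]
  let E : M ≃ₗ[R] (Module.Free.ChooseBasisIndex R M →₀ R) := c.repr
  let D : (t →₀ R) ≃ₗ[R] (Module.Free.ChooseBasisIndex R M →₀ R) := Finsupp.domLCongr σ
  have hend : Function.Surjective (E.toLinearMap ∘ₗ q ∘ₗ D.symm.toLinearMap) := by
    exact E.surjective.comp (hq.comp D.symm.surjective)
  have hinjend : Function.Injective (E.toLinearMap ∘ₗ q ∘ₗ D.symm.toLinearMap) :=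
    OrzechProperty.injective_of_surjective_endomorphism _ hend
  have hqinj : Function.Injective q := by
    intro a b hab
    have h1 : (E.toLinearMap ∘ₗ q ∘ₗ D.symm.toLinearMap) (D a)
        = (E.toLinearMap ∘ₗ q ∘ₗ D.symm.toLinearMap) (D b) := by
      simp only [LinearMap.comp_apply, LinearEquiv.coe_coe, D.symm_apply_apply, hab]
    exact D.injective (hinjend h1)
  have hmli : LinearIndependent R m :=
    linearIndependent_iff_injective_finsuppLinearCombination.mpr hqinj
  have hcomp : LinearIndependent R (m ∘ fun i => (⟨w i, hsub ⟨i, rfl⟩⟩ : t)) :=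
    hmli.comp _ (fun i i' hii' => hinjw (congrArg Subtype.val hii'))
  have : (m ∘ fun i => (⟨w i, hsub ⟨i, rfl⟩⟩ : t)) = v := by
    funext i
    have h : ∃ i', w i' = w i := ⟨i, rfl⟩
    simp only [Function.comp_apply, hmdef, dif_pos h]
    exact congrArg v (hinjw h.choose_spec)
  rwa [this] at hcomp

/-- Linear independence over the residue field at `p` implies linear independence over `K`. -/
theorem aux_chain (A : Type*) [CommRing A] [IsDomain A]
    (K : Type*) [Field K] [Algebra A K] [IsFractionRing A K]
    (F : Type*) [AddCommGroup F] [Module A F]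
    [Module.Finite A F] [Module.Projective A F]
    (p : PrimeSpectrum A) {ι : Type*} (y : ι → F)
    (hy : LinearIndependent (resField p) fun i => (1 : resField p) ⊗ₜ[A] y i) :
    LinearIndependent K fun i => (1 : K) ⊗ₜ[A] y i := by
  classical
  set Rp := Localization.AtPrime p.asIdeal
  set k := resField p
  -- move to k ⊗[Rp] (Rp ⊗[A] F)
  let e : k ⊗[Rp] (Rp ⊗[A] F) ≃ₗ[k] k ⊗[A] F :=
    AlgebraTensorModule.cancelBaseChange A Rp k k F
  have hfun : (fun i => (1 : k) ⊗ₜ[Rp] ((1 : Rp) ⊗ₜ[A] y i))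
      = ⇑e.symm.toLinearMap ∘ (fun i => (1 : k) ⊗ₜ[A] y i) := by
    funext i
    apply e.injective
    rw [show e ((1 : k) ⊗ₜ[Rp] ((1 : Rp) ⊗ₜ[A] y i))
        = ((1 : Rp) • (1 : k)) ⊗ₜ[A] y i from
      AlgebraTensorModule.cancelBaseChange_tmul A Rp k (1 : k) (y i) 1, one_smul]
    simp only [Function.comp_apply, LinearEquiv.coe_coe, LinearEquiv.apply_symm_apply]
  have h2 : LinearIndependent k fun i => (1 : k) ⊗ₜ[Rp] ((1 : Rp) ⊗ₜ[A] y i) := by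
    rw [hfun]
    have hker : LinearMap.ker e.symm.toLinearMap = ⊥ :=
      LinearMap.ker_eq_bot_of_injective e.symm.injective
    have := hy.map' (M' := k ⊗[Rp] (Rp ⊗[A] F)) e.symm.toLinearMap hker
    exact this
  -- free module over the local ring Rp
  haveI : Module.Projective Rp (Rp ⊗[A] F) := inferInstance
  haveI : Module.FinitePresentation Rp (Rp ⊗[A] F) :=
    Module.finitePresentation_of_projective _ _
  haveI : Module.Free Rp (Rp ⊗[A] F) := Module.free_of_flat_of_isLocalRing
  have h3 : LinearIndependent Rp (fun i => (1 : Rp) ⊗ₜ[A] y i) := aux_li _ h2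
  -- restrict scalars to A
  have halg : Function.Injective (algebraMap A Rp) :=
    IsLocalization.injective Rp p.asIdeal.primeCompl_le_nonZeroDivisors
  have h4 : LinearIndependent A (fun i => (1 : Rp) ⊗ₜ[A] y i) := by
    refine h3.restrict_scalars ?_
    intro a b hab
    apply halg
    simpa [Algebra.smul_def] using hab
  -- pull back to F
  have h5 : LinearIndependent A y :=
    LinearIndependent.of_comp ((TensorProduct.mk A Rp F) 1) h4
  -- push to K ⊗ F
  have hjF : Function.Injective ((TensorProduct.mk A K F) 1) := by
    have hflat : Function.Injective ((Algebra.linearMap A K).rTensor F) :=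
      Module.Flat.rTensor_preserves_injective_linearMap _ (IsFractionRing.injective A K)
    have : ⇑((TensorProduct.mk A K F) 1)
        = ((Algebra.linearMap A K).rTensor F) ∘ ⇑(TensorProduct.lid A F).symm := by
      funext x
      simp
    rw [this]
    exact hflat.comp (TensorProduct.lid A F).symm.injective
  have h6 : LinearIndependent A (fun i => (1 : K) ⊗ₜ[A] y i) :=
    h5.map' ((TensorProduct.mk A K F) 1) (LinearMap.ker_eq_bot_of_injective hjF)
  exact (LinearIndependent.iff_fractionRing A K).mp h6

theorem aux_ub (A : Type*) [CommRing A] [IsDomain A]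
    (K : Type*) [Field K] [Algebra A K] [IsFractionRing A K]
    (F : Type*) [AddCommGroup F] [Module A F]
    [Module.Finite A F] [Module.Projective A F]
    (F' : Submodule A F) (p : PrimeSpectrum A) :
    Module.finrank (resField p) (LinearMap.range (F'.subtype.baseChange (resField p)))
      ≤ Module.finrank K (K ⊗[A] F') := by
  classical
  set k := resField p with hkdef
  set φ := F'.subtype.baseChange k with hφdef
  set S : Set (k ⊗[A] F) := Set.range fun x : F' => (1 : k) ⊗ₜ[A] (x : F) with hSdef
  have hrange : LinearMap.range φ = Submodule.span k S := by
    apply le_antisymm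
    · rintro z ⟨u, rfl⟩
      induction u with
      | zero => simp
      | tmul c x =>
          have h1 : φ (c ⊗ₜ x) = c • ((1 : k) ⊗ₜ[A] (x : F)) := by
            simp [hφdef, TensorProduct.smul_tmul']
          rw [h1]
          exact Submodule.smul_mem _ _ (Submodule.subset_span ⟨x, rfl⟩)
      | add u v hu hv => rw [map_add]; exact Submodule.add_mem _ hu hv
    · rw [Submodule.span_le]
      rintro _ ⟨x, rfl⟩
      exact ⟨(1 : k) ⊗ₜ[A] x, by simp [hφdef]⟩
  obtain ⟨t, hts, hsp, hli⟩ := exists_linearIndependent k S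
  haveI : IsNoetherian k (k ⊗[A] F) := isNoetherian_of_isNoetherianRing_of_finite k _
  have htfin : t.Finite := hli.set_finite_of_isNoetherian
  haveI : Fintype t := htfin.fintype
  choose y hy using fun j : t => hts j.2
  have hliy : LinearIndependent k fun j : t => (1 : k) ⊗ₜ[A] ((y j : F' ) : F) := by
    rw [show (fun j : t => (1 : k) ⊗ₜ[A] ((y j : F' ) : F)) = ((↑) : t → k ⊗[A] F) from
      funext hy]
    exact hli
  have hK : LinearIndependent K fun j : t => (1 : K) ⊗ₜ[A] ((y j : F' ) : F) :=
    aux_chain A K F p _ hliy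
  -- descend to K ⊗ F'
  set ψ := F'.subtype.baseChange K with hψdef
  have hfam : LinearIndependent K fun j : t => (1 : K) ⊗ₜ[A] (y j) := by
    refine LinearIndependent.of_comp ψ ?_
    have : (⇑ψ ∘ fun j : t => (1 : K) ⊗ₜ[A] (y j))
        = fun j : t => (1 : K) ⊗ₜ[A] ((y j : F' ) : F) := by
      funext j; simp [hψdef]
    rw [this]
    exact hK
  haveI : Module.Flat A K := IsLocalization.flat K (nonZeroDivisors A)
  have hψ : Function.Injective ψ := by
    rw [hψdef, LinearMap.baseChange_eq_ltensor]
    exact Module.Flat.lTensor_preserves_injective_linearMap _ F'.injective_subtype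
  haveI : Module.Finite K (K ⊗[A] F') := Module.Finite.of_injective ψ hψ
  have hcard : Fintype.card t ≤ Module.finrank K (K ⊗[A] F') :=
    hfam.fintype_card_le_finrank
  have heq : Module.finrank k ↥(LinearMap.range φ) = t.toFinset.card := by
    rw [hrange, ← hsp]
    exact finrank_span_set_eq_card hli
  rw [heq, Set.toFinset_card]
  exact hcard

theorem aux_mem (A : Type*) [CommRing A] [IsDomain A]
    (K : Type*) [Field K] [Algebra A K] [IsFractionRing A K]
    (F : Type*) [AddCommGroup F] [Module A F]
    [Module.Finite A F] [Module.Projective A F]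
    (F' : Submodule A F) :
    Module.finrank K (K ⊗[A] F')
      = Module.finrank (resField (⟨⊥, Ideal.bot_prime⟩ : PrimeSpectrum A))
          (LinearMap.range (F'.subtype.baseChange
            (resField (⟨⊥, Ideal.bot_prime⟩ : PrimeSpectrum A)))) := by
  classical
  set p₀ : PrimeSpectrum A := ⟨⊥, Ideal.bot_prime⟩ with hp₀
  have hbot : p₀.asIdeal = ⊥ := rfl
  haveI : p₀.asIdeal.IsPrime := p₀.2
  set R₀ := Localization.AtPrime p₀.asIdeal with hR₀
  set k₀ := resField p₀ with hk₀
  have hcompl : p₀.asIdeal.primeCompl = nonZeroDivisors A := by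
    ext x
    simp [hbot, Ideal.primeCompl, mem_nonZeroDivisors_iff_ne_zero]
  haveI : IsLocalization (nonZeroDivisors A) R₀ := hcompl ▸ Localization.isLocalization
  have hm : IsLocalRing.maximalIdeal R₀ = ⊥ := by
    rw [← Localization.AtPrime.map_eq_maximalIdeal]
    refine le_bot_iff.mp (Ideal.map_le_iff_le_comap.mpr ?_)
    exact le_trans (le_of_eq hbot) bot_le
  let ρ : R₀ →ₐ[A] k₀ := IsScalarTower.toAlgHom A R₀ k₀
  have hρ : ⇑ρ = ⇑(IsLocalRing.residue R₀) := by
    show ⇑(algebraMap R₀ k₀) = _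
    rw [IsLocalRing.ResidueField.algebraMap_eq]
  have hbij : Function.Bijective ρ := by
    rw [hρ]
    constructor
    · rw [injective_iff_map_eq_zero]
      intro a ha
      rw [← RingHom.mem_ker, IsLocalRing.ker_residue, hm] at ha
      exact ha
    · exact IsLocalRing.residue_surjective
  let e : K ≃ₐ[A] k₀ :=
    (IsLocalization.algEquiv (nonZeroDivisors A) K R₀).trans (AlgEquiv.ofBijective ρ hbij)
  haveI : Module.Flat A K := IsLocalization.flat K (nonZeroDivisors A)
  haveI : Module.Flat A k₀ := Module.Flat.of_linearEquiv e.symm.toLinearEquiv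
  set ψ := F'.subtype.baseChange k₀ with hψdef
  have hψ : Function.Injective ψ := by
    rw [hψdef, LinearMap.baseChange_eq_ltensor]
    exact Module.Flat.lTensor_preserves_injective_linearMap _ F'.injective_subtype
  have h1 : Module.finrank k₀ ↥(LinearMap.range ψ) = Module.finrank k₀ (k₀ ⊗[A] F') :=
    (LinearEquiv.ofInjective ψ hψ).symm.finrank_eq
  -- transfer the dimension along `e`
  let τ : (K ⊗[A] F') ≃ₗ[A] (k₀ ⊗[A] F') :=
    TensorProduct.congr e.toLinearEquiv (LinearEquiv.refl A F')
  have hsc : ∀ (c : K) (x : K ⊗[A] F'), τ (c • x) = e c • τ x := by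
    intro c x
    induction x with
    | zero => simp
    | tmul a b =>
        rw [TensorProduct.smul_tmul']
        simp only [τ, TensorProduct.congr_tmul, LinearEquiv.refl_apply,
          AlgEquiv.toLinearEquiv_apply, smul_eq_mul, map_mul]
        rw [TensorProduct.smul_tmul', smul_eq_mul]
    | add u v hu hv => simp only [smul_add, map_add, hu, hv]
  have hrank := lift_rank_eq_of_equiv_equiv (R := K) (R' := k₀)
    (M := K ⊗[A] F') (M' := k₀ ⊗[A] F') ⇑e τ.toAddEquiv e.bijective hsc
  have h2 : Module.finrank K (K ⊗[A] F') = Module.finrank k₀ (k₀ ⊗[A] F') := by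
    have := congrArg Cardinal.toNat hrank
    rwa [Cardinal.toNat_lift, Cardinal.toNat_lift] at this
  rw [h2, ← h1]

/-- for `A` a domain with fraction field `K`, `F` a finitely generated
projective `A`-module and `F' ⊆ F` a submodule, the dimension of `F' ⊗ K` over `K`
is the maximum over all primes `p` of the dimension over `k(p)` of the image of
`F' ⊗ k(p) → F ⊗ k(p)`. -/
theorem stmt0 (A : Type*) [CommRing A] [IsDomain A]
    (K : Type*) [Field K] [Algebra A K] [IsFractionRing A K]
    (F : Type*) [AddCommGroup F] [Module A F]
    [Module.Finite A F] [Module.Projective A F]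
    (F' : Submodule A F) :
    IsGreatest {n : ℕ | ∃ p : PrimeSpectrum A,
        n = Module.finrank (resField p)
          (LinearMap.range (F'.subtype.baseChange (resField p)))}
      (Module.finrank K (K ⊗[A] F')) := by
  constructor
  · exact ⟨⟨⊥, Ideal.bot_prime⟩, aux_mem A K F F'⟩
  · rintro n ⟨p, rfl⟩
    exact aux_ub A K F F' p
end

section
/- Let A be a commutative integral domain, F a finitely generated projective A-module, and F', F'' direct summands of F. If for a prime p the sum F'_p + F''_p is a direct summand of F_p, then the canonical map (F'∩F'')⊗_A k(p) → F⊗_A k(p) is an isomorphism onto I'(p)∩I''(p), where I'(p), I''(p) are the images of F'⊗_A k(p) and F''⊗_A k(p) in F⊗_A k(p). -/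
set_option maxHeartbeats 1000000
set_option synthInstance.maxHeartbeats 400000


open TensorProduct

section Helpers

variable {A : Type*} [CommRing A] (p : PrimeSpectrum A)
  {M N : Type*} [AddCommGroup M] [Module A M] [AddCommGroup N] [Module A N]

/-- Base change of a split injection is injective. -/
lemma inj_of_retract (B : Type*) [CommRing B] [Algebra A B]
    (f : M →ₗ[A] N) (r : N →ₗ[A] M) (h : r ∘ₗ f = LinearMap.id) :
    Function.Injective (f.baseChange B) := by
  have hc : r.baseChange B ∘ₗ f.baseChange B = LinearMap.id := by
    rw [← LinearMap.baseChange_comp, h, LinearMap.baseChange_id]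
  intro x y hxy
  have hx := LinearMap.congr_fun hc x
  have hy := LinearMap.congr_fun hc y
  simp only [LinearMap.comp_apply, LinearMap.id_apply] at hx hy
  rw [← hx, ← hy, hxy]

/-- The canonical equivalence `k(p) ⊗[A] M ≃ k(p) ⊗[A_p] M_p`. -/
noncomputable def locTensorEquiv (M : Type*) [AddCommGroup M] [Module A M] :
    resField p ⊗[A] M ≃ₗ[resField p]
      resField p ⊗[Localization.AtPrime p.asIdeal] (LocalizedModule p.asIdeal.primeCompl M) :=
  (AlgebraTensorModule.cancelBaseChange A (Localization.AtPrime p.asIdeal)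
      (resField p) (resField p) M).symm ≪≫ₗ
    LinearEquiv.baseChange _ (resField p) _ _
      (IsLocalizedModule.isBaseChange p.asIdeal.primeCompl (Localization.AtPrime p.asIdeal)
        (LocalizedModule.mkLinearMap p.asIdeal.primeCompl M)).equiv

lemma locTensorEquiv_tmul (c : resField p) (x : M) :
    locTensorEquiv p M (c ⊗ₜ x) = c ⊗ₜ (LocalizedModule.mkLinearMap p.asIdeal.primeCompl M x) := by
  simp [locTensorEquiv, LinearEquiv.baseChange, IsBaseChange.equiv_tmul]

lemma locTensorEquiv_naturality (f : M →ₗ[A] N) (x : resField p ⊗[A] M) :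
    locTensorEquiv p N (f.baseChange (resField p) x) =
      (LocalizedModule.map p.asIdeal.primeCompl f).baseChange (resField p)
        (locTensorEquiv p M x) := by
  induction x with
  | zero => simp
  | tmul c m =>
      simp only [LinearMap.baseChange_tmul, locTensorEquiv_tmul]
      simp [LocalizedModule.mkLinearMap_apply, LocalizedModule.map_mk]
  | add x y hx hy => simp [map_add, hx, hy]

/-- If the localization of `f` at `p` admits a retraction, then `f ⊗ k(p)` is injective. -/
lemma key_injective (f : M →ₗ[A] N)
    (g : LocalizedModule p.asIdeal.primeCompl N →ₗ[Localization.AtPrime p.asIdeal]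
      LocalizedModule p.asIdeal.primeCompl M)
    (hg : ∀ x, g (LocalizedModule.map p.asIdeal.primeCompl f x) = x) :
    Function.Injective (f.baseChange (resField p)) := by
  have hc0 : g ∘ₗ LocalizedModule.map p.asIdeal.primeCompl f = LinearMap.id :=
    LinearMap.ext hg
  have h1 : Function.Injective
      ((LocalizedModule.map p.asIdeal.primeCompl f).baseChange (resField p)) := by
    have hc : g.baseChange (resField p) ∘ₗ
        (LocalizedModule.map p.asIdeal.primeCompl f).baseChange (resField p) = LinearMap.id := by
      rw [← LinearMap.baseChange_comp, hc0, LinearMap.baseChange_id]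
    intro x y hxy
    have hx := LinearMap.congr_fun hc x
    have hy := LinearMap.congr_fun hc y
    simp only [LinearMap.comp_apply, LinearMap.id_apply] at hx hy
    rw [← hx, ← hy, hxy]
  intro x y hxy
  apply (locTensorEquiv p M).injective
  apply h1
  rw [← locTensorEquiv_naturality, ← locTensorEquiv_naturality, hxy]

end Helpers

/-- if `F'`, `F''` are direct summands of a finitely generated projective
module `F` over a domain `A`, and at a prime `p` the sum `F'_p + F''_p` is a direct
summand of `F_p`, then the canonical map `(F' ∩ F'') ⊗ k(p) → F ⊗ k(p)` is an
isomorphism onto `I'(p) ∩ I''(p)`. -/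
theorem stmt3 (A : Type*) [CommRing A] [IsDomain A]
    (F : Type*) [AddCommGroup F] [Module A F]
    [Module.Finite A F] [Module.Projective A F]
    (F' F'' : Submodule A F)
    (h' : ∃ N : Submodule A F, IsCompl F' N)
    (h'' : ∃ N : Submodule A F, IsCompl F'' N)
    (p : PrimeSpectrum A)
    (hp : ∃ N : Submodule (Localization.AtPrime p.asIdeal)
        (LocalizedModule p.asIdeal.primeCompl F),
      IsCompl ((F' ⊔ F'').localized p.asIdeal.primeCompl) N) :
    Function.Injective ((F' ⊓ F'').subtype.baseChange (resField p)) ∧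
      LinearMap.range ((F' ⊓ F'').subtype.baseChange (resField p)) =
        LinearMap.range (F'.subtype.baseChange (resField p)) ⊓
          LinearMap.range (F''.subtype.baseChange (resField p)) := by
  classical
  set K := resField p with hK
  set pc := p.asIdeal.primeCompl with hpc
  set S : Submodule A F := F' ⊔ F'' with hS
  set D : Submodule A F := F' ⊓ F'' with hD
  obtain ⟨N', hN'⟩ := h'
  obtain ⟨N'', hN''⟩ := h''
  obtain ⟨Np, hNp⟩ := hp
  -- retractions over A
  set r' : F →ₗ[A] F' := F'.linearProjOfIsCompl N' hN' with hr'
  set r'' : F →ₗ[A] F'' := F''.linearProjOfIsCompl N'' hN'' with hr''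
  have hr'id : r' ∘ₗ F'.subtype = LinearMap.id := by
    ext x; simp [hr']; exact Submodule.linearProjOfIsCompl_apply_left hN' x
  have hr''id : r'' ∘ₗ F''.subtype = LinearMap.id := by
    ext x; simp [hr'']; exact Submodule.linearProjOfIsCompl_apply_left hN'' x
  -- finiteness
  have finF' : Module.Finite A F' := by
    apply Module.Finite.of_surjective r'
    intro y; exact ⟨↑y, by simp [hr']; exact Submodule.linearProjOfIsCompl_apply_left hN' y⟩
  have finF'' : Module.Finite A F'' := by
    apply Module.Finite.of_surjective r''
    intro y; exact ⟨↑y, by simp [hr'']; exact Submodule.linearProjOfIsCompl_apply_left hN'' y⟩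
  have finS : Module.Finite A S := by
    rw [Module.Finite.iff_fg]
    exact Submodule.FG.sup (Module.Finite.iff_fg.mp finF') (Module.Finite.iff_fg.mp finF'')
  -- the maps φ and ψ
  set φ : D →ₗ[A] F' × F'' :=
    (Submodule.inclusion (inf_le_left : D ≤ F')).prod
      (Submodule.inclusion (inf_le_right : D ≤ F'')) with hφ
  set ψ0 : F' × F'' →ₗ[A] F :=
    F'.subtype ∘ₗ LinearMap.fst A F' F'' - F''.subtype ∘ₗ LinearMap.snd A F' F'' with hψ0
  have hψ0apply : ∀ x : F' × F'', ψ0 x = (x.1 : F) - (x.2 : F) := fun x => rfl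
  have hψ0mem : ∀ x : F' × F'', ψ0 x ∈ S := by
    rintro ⟨a, b⟩
    rw [hψ0apply]
    exact Submodule.sub_mem _ (le_sup_left (a := F') (b := F'') a.2)
      (le_sup_right (a := F') (b := F'') b.2)
  set ψ : F' × F'' →ₗ[A] S := ψ0.codRestrict S hψ0mem with hψ
  have hψval : ∀ x : F' × F'', (ψ x : F) = (x.1 : F) - (x.2 : F) := fun x => rfl
  have hφval : ∀ x : D, ((φ x).1 : F) = (x : F) ∧ ((φ x).2 : F) = (x : F) :=
    fun x => ⟨rfl, rfl⟩
  have hφinj : Function.Injective φ := by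
    intro x y hxy
    have h1 : ((φ x).1 : F) = ((φ y).1 : F) :=
      congrArg (fun z : (F' × F'' : Type _) => ((z.1 : F))) hxy
    rw [(hφval x).1, (hφval y).1] at h1
    exact Subtype.ext h1
  have hψsurj : Function.Surjective ψ := by
    rintro ⟨z, hz⟩
    rw [hS, Submodule.mem_sup] at hz
    obtain ⟨x, hx, y, hy, hxy⟩ := hz
    refine ⟨(⟨x, hx⟩, ⟨-y, Submodule.neg_mem _ hy⟩), ?_⟩
    apply Subtype.ext
    rw [hψval]
    simpa using hxy
  have hexact : Function.Exact φ ψ := by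
    rw [LinearMap.exact_iff]
    ext z
    constructor
    · intro h
      have hz : (ψ z : F) = 0 := by rw [h]; rfl
      rw [hψval] at hz
      have hab : (z.1 : F) = (z.2 : F) := sub_eq_zero.mp hz
      refine ⟨⟨(z.1 : F), z.1.2, by rw [hab]; exact z.2.2⟩, ?_⟩
      exact Prod.ext (Subtype.ext ((hφval _).1)) (Subtype.ext ((hφval _).2.trans hab))
    · rintro ⟨x, rfl⟩
      show ψ (φ x) = 0
      apply Subtype.ext
      rw [hψval, (hφval x).1, (hφval x).2, sub_self]
      rfl
  -- localized retraction for S.subtype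
  haveI : Module.Projective (Localization.AtPrime p.asIdeal) (LocalizedModule pc F) :=
    Module.projective_of_isLocalizedModule pc (LocalizedModule.mkLinearMap pc F)
  set π := (S.localized pc).linearProjOfIsCompl Np hNp with hπ
  set μ : (S.localized pc : Submodule _ _) →ₗ[A] LocalizedModule pc S :=
    IsLocalizedModule.map pc (S.toLocalized pc) (LocalizedModule.mkLinearMap pc S)
      LinearMap.id with hμ
  set g : LocalizedModule pc F →ₗ[Localization.AtPrime p.asIdeal] LocalizedModule pc S :=
    (μ ∘ₗ π.restrictScalars A).extendScalarsOfIsLocalization pc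
      (Localization.AtPrime p.asIdeal) with hg
  have hgS : ∀ x, g (LocalizedModule.map pc S.subtype x) = x := by
    intro x
    induction x using LocalizedModule.induction_on with
    | h m s =>
      have h1 : LocalizedModule.map pc S.subtype (LocalizedModule.mk m s)
          = LocalizedModule.mk (m : F) s := LocalizedModule.map_mk pc _ _ _
      have h2 : (LocalizedModule.mk (m : F) s : LocalizedModule pc F)
          = Localization.mk 1 s • LocalizedModule.mk (m : F) 1 := by
        rw [LocalizedModule.mk_smul_mk, one_smul, mul_one]
      have hmem : (LocalizedModule.mk (m : F) 1 : LocalizedModule pc F) ∈ S.localized pc := by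
        refine ⟨(m : F), m.2, 1, ?_⟩
        rw [IsLocalizedModule.mk'_one]
        rfl
      have h3 : g (LocalizedModule.mk (m : F) 1) = LocalizedModule.mk m 1 := by
        rw [hg]
        show (μ ∘ₗ π.restrictScalars A) (LocalizedModule.mk (m : F) 1) = _
        have hπval : π (LocalizedModule.mk (m : F) 1) = ⟨LocalizedModule.mk (m : F) 1, hmem⟩ :=
          Submodule.linearProjOfIsCompl_apply_left hNp ⟨LocalizedModule.mk (m : F) 1, hmem⟩
        have htoloc : (⟨LocalizedModule.mk (m : F) 1, hmem⟩ : S.localized pc)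
            = S.toLocalized pc m := by
          apply Subtype.ext
          rfl
        rw [LinearMap.comp_apply, LinearMap.restrictScalars_apply, hπval, htoloc, hμ,
          IsLocalizedModule.map_apply]
        rfl
      rw [h1, h2, map_smul, h3, LocalizedModule.mk_smul_mk, one_smul, mul_one]
  haveI : Module.Projective (Localization.AtPrime p.asIdeal) (LocalizedModule pc S) :=
    Module.Projective.of_split (LocalizedModule.map pc S.subtype) g (LinearMap.ext hgS)
  -- localized retraction for φ
  set Φ := LocalizedModule.map pc φ with hΦdef
  set Ψ := LocalizedModule.map pc ψ with hΨdef
  have hΦinj : Function.Injective Φ := LocalizedModule.map_injective pc φ hφinj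
  have hΨsurj : Function.Surjective Ψ := LocalizedModule.map_surjective pc ψ hψsurj
  have hexactP : Function.Exact Φ Ψ := LocalizedModule.map_exact pc φ ψ hexact
  obtain ⟨σ, hσ⟩ := Module.projective_lifting_property Ψ LinearMap.id hΨsurj
  have hmemker : ∀ y, y - σ (Ψ y) ∈ LinearMap.range Φ := by
    intro y
    rw [← LinearMap.exact_iff.mp hexactP]
    simp only [LinearMap.mem_ker, map_sub]
    have := LinearMap.congr_fun hσ (Ψ y)
    simp only [LinearMap.comp_apply, LinearMap.id_apply] at this
    rw [this, sub_self]
  set eΦ := LinearEquiv.ofInjective Φ hΦinj with heΦ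
  set gφ : LocalizedModule pc (F' × F'' : Type _) →ₗ[Localization.AtPrime p.asIdeal]
      LocalizedModule pc D :=
    eΦ.symm.toLinearMap ∘ₗ (LinearMap.id - σ ∘ₗ Ψ).codRestrict (LinearMap.range Φ) hmemker
      with hgφ
  have hgφid : ∀ x, gφ (Φ x) = x := by
    intro x
    rw [hgφ]
    have hz : Ψ (Φ x) = 0 := hexactP.apply_apply_eq_zero x
    have h4 : (LinearMap.id - σ ∘ₗ Ψ).codRestrict (LinearMap.range Φ) hmemker (Φ x) = eΦ x := by
      apply Subtype.ext
      simp only [LinearMap.codRestrict_apply, LinearMap.sub_apply, LinearMap.id_apply,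
        LinearMap.comp_apply, hz, map_zero, sub_zero]
      rfl
    simp only [LinearMap.comp_apply, LinearEquiv.coe_coe, h4, LinearEquiv.symm_apply_apply]
  -- injectivity of base-changed maps
  have inj_i' : Function.Injective (F'.subtype.baseChange K) :=
    inj_of_retract K F'.subtype r' hr'id
  have inj_i'' : Function.Injective (F''.subtype.baseChange K) :=
    inj_of_retract K F''.subtype r'' hr''id
  have inj_iS : Function.Injective (S.subtype.baseChange K) :=
    key_injective p S.subtype g hgS
  have inj_Φk : Function.Injective (φ.baseChange K) :=
    key_injective p φ gφ hgφid
  -- the product decomposition after base change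
  set u : K ⊗[A] (F' × F'' : Type _) →ₗ[K] (K ⊗[A] F') × (K ⊗[A] F'') :=
    ((LinearMap.fst A F' F'').baseChange K).prod ((LinearMap.snd A F' F'').baseChange K) with hu
  set v : (K ⊗[A] F') × (K ⊗[A] F'') →ₗ[K] K ⊗[A] (F' × F'' : Type _) :=
    ((LinearMap.inl A F' F'').baseChange K).coprod ((LinearMap.inr A F' F'').baseChange K) with hv
  have huv : ∀ z, v (u z) = z := by
    intro z
    induction z with
    | zero => simp
    | tmul c m =>
        obtain ⟨a, b⟩ := m
        simp only [hu, hv, LinearMap.prod_apply, Function.prod, LinearMap.baseChange_tmul,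
          LinearMap.coprod_apply, LinearMap.fst_apply, LinearMap.snd_apply,
          LinearMap.inl_apply, LinearMap.inr_apply]
        rw [← TensorProduct.tmul_add]
        simp
    | add x y hx hy => simp only [map_add, hx, hy]
  have hvu : ∀ w, u (v w) = w := by
    rintro ⟨z1, z2⟩
    simp only [hv, LinearMap.coprod_apply, map_add, hu, LinearMap.prod_apply, Pi.prod]
    have e11 : (LinearMap.fst A F' F'').baseChange K ∘ₗ (LinearMap.inl A F' F'').baseChange K
        = LinearMap.id := by
      rw [← LinearMap.baseChange_comp, LinearMap.fst_comp_inl, LinearMap.baseChange_id]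
    have e12 : (LinearMap.snd A F' F'').baseChange K ∘ₗ (LinearMap.inl A F' F'').baseChange K
        = 0 := by
      rw [← LinearMap.baseChange_comp, LinearMap.snd_comp_inl, LinearMap.baseChange_zero]
    have e21 : (LinearMap.fst A F' F'').baseChange K ∘ₗ (LinearMap.inr A F' F'').baseChange K
        = 0 := by
      rw [← LinearMap.baseChange_comp, LinearMap.fst_comp_inr, LinearMap.baseChange_zero]
    have e22 : (LinearMap.snd A F' F'').baseChange K ∘ₗ (LinearMap.inr A F' F'').baseChange K
        = LinearMap.id := by
      rw [← LinearMap.baseChange_comp, LinearMap.snd_comp_inr, LinearMap.baseChange_id]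
    have c11 := LinearMap.congr_fun e11 z1
    have c12 := LinearMap.congr_fun e12 z1
    have c21 := LinearMap.congr_fun e21 z2
    have c22 := LinearMap.congr_fun e22 z2
    simp only [LinearMap.comp_apply, LinearMap.id_apply, LinearMap.zero_apply] at c11 c12 c21 c22
    rw [Prod.ext_iff]
    constructor
    · show (LinearMap.fst A F' F'').baseChange K _ + (LinearMap.fst A F' F'').baseChange K _ = z1
      rw [c11, c21, add_zero]
    · show (LinearMap.snd A F' F'').baseChange K _ + (LinearMap.snd A F' F'').baseChange K _ = z2
      rw [c12, c22, zero_add]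
  set E : (K ⊗[A] (F' × F'' : Type _)) ≃ₗ[K] (K ⊗[A] F') × (K ⊗[A] F'') :=
    LinearEquiv.ofLinear u v (LinearMap.ext hvu) (LinearMap.ext huv) with hE
  -- components of φ
  have hfstφ : LinearMap.fst A F' F'' ∘ₗ φ = Submodule.inclusion (inf_le_left : D ≤ F') := by
    ext x; rfl
  have hsndφ : LinearMap.snd A F' F'' ∘ₗ φ = Submodule.inclusion (inf_le_right : D ≤ F'') := by
    ext x; rfl
  have hsub' : F'.subtype ∘ₗ Submodule.inclusion (inf_le_left : D ≤ F') = D.subtype := by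
    ext x; rfl
  have hsub'' : F''.subtype ∘ₗ Submodule.inclusion (inf_le_right : D ≤ F'') = D.subtype := by
    ext x; rfl
  -- injectivity of iD
  have inj_iD : Function.Injective (D.subtype.baseChange K) := by
    intro x y hxy
    have hcomp' : ∀ ξ, F'.subtype.baseChange K
        ((LinearMap.fst A F' F'').baseChange K (φ.baseChange K ξ)) = D.subtype.baseChange K ξ := by
      intro ξ
      rw [← LinearMap.comp_apply, ← LinearMap.baseChange_comp, ← LinearMap.comp_apply,
        ← LinearMap.baseChange_comp, LinearMap.comp_assoc, hfstφ, hsub']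
    have hcomp'' : ∀ ξ, F''.subtype.baseChange K
        ((LinearMap.snd A F' F'').baseChange K (φ.baseChange K ξ)) = D.subtype.baseChange K ξ := by
      intro ξ
      rw [← LinearMap.comp_apply, ← LinearMap.baseChange_comp, ← LinearMap.comp_apply,
        ← LinearMap.baseChange_comp, LinearMap.comp_assoc, hsndφ, hsub'']
    apply inj_Φk
    apply E.injective
    have e1 : (LinearMap.fst A F' F'').baseChange K (φ.baseChange K x)
        = (LinearMap.fst A F' F'').baseChange K (φ.baseChange K y) :=
      inj_i' (by rw [hcomp', hcomp', hxy])
    have e2 : (LinearMap.snd A F' F'').baseChange K (φ.baseChange K x)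
        = (LinearMap.snd A F' F'').baseChange K (φ.baseChange K y) :=
      inj_i'' (by rw [hcomp'', hcomp'', hxy])
    show u _ = u _
    rw [hu]
    simp only [LinearMap.prod_apply, Function.prod]
    rw [e1, e2]
  refine ⟨inj_iD, ?_⟩
  -- surjectivity and exactness after base change
  have hψk_surj : Function.Surjective (ψ.baseChange K) := by
    rw [LinearMap.baseChange_eq_ltensor]
    exact LinearMap.lTensor_surjective K hψsurj
  have hexactk : Function.Exact (φ.baseChange K) (ψ.baseChange K) := by
    have h := lTensor_exact K hexact hψsurj
    have hφl : ⇑(φ.baseChange K) = ⇑(LinearMap.lTensor K φ) := LinearMap.baseChange_eq_ltensor φ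
    have hψl : ⇑(ψ.baseChange K) = ⇑(LinearMap.lTensor K ψ) := LinearMap.baseChange_eq_ltensor ψ
    rwa [hφl, hψl]
  -- finite dimensionality
  haveI : Module.Finite A (F' × F'' : Type _) := Module.Finite.prod
  haveI findF : FiniteDimensional K (K ⊗[A] F) := inferInstance
  haveI findP : FiniteDimensional K (K ⊗[A] (F' × F'' : Type _)) := inferInstance
  haveI findF' : FiniteDimensional K (K ⊗[A] F') := inferInstance
  haveI findF'' : FiniteDimensional K (K ⊗[A] F'') := inferInstance
  haveI findS : FiniteDimensional K (K ⊗[A] S) := inferInstance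
  haveI findD : FiniteDimensional K (K ⊗[A] D) :=
    FiniteDimensional.of_injective (φ.baseChange K) inj_Φk
  -- dimension bookkeeping
  have hdim1 : Module.finrank K (K ⊗[A] (F' × F'' : Type _)) =
      Module.finrank K (K ⊗[A] F') + Module.finrank K (K ⊗[A] F'') := by
    rw [E.finrank_eq, Module.finrank_prod]
  have hrn := LinearMap.finrank_range_add_finrank_ker (ψ.baseChange K)
  have hrange : LinearMap.range (ψ.baseChange K) = ⊤ := LinearMap.range_eq_top.mpr hψk_surj
  have hker : LinearMap.ker (ψ.baseChange K) = LinearMap.range (φ.baseChange K) :=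
    LinearMap.exact_iff.mp hexactk
  rw [hrange, hker, finrank_top] at hrn
  have h5 : Module.finrank K (LinearMap.range (φ.baseChange K)) =
      Module.finrank K (K ⊗[A] D) := LinearMap.finrank_range_of_inj inj_Φk
  rw [h5, hdim1] at hrn
  -- hrn : finrank (K⊗S) + finrank (K⊗D) = finrank (K⊗F') + finrank (K⊗F'')
  -- range of iS is the sup of the ranges
  have hcomp1 : S.subtype ∘ₗ ψ = ψ0 := LinearMap.subtype_comp_codRestrict (f := ψ0) S hψ0mem
  have hrS : LinearMap.range (S.subtype.baseChange K) = LinearMap.range (ψ0.baseChange K) := by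
    rw [← hcomp1, LinearMap.baseChange_comp,
      LinearMap.range_comp_of_range_eq_top _ hrange]
  have hψ0inl : ψ0 ∘ₗ LinearMap.inl A F' F'' = F'.subtype := by
    ext x
    rw [LinearMap.comp_apply, hψ0apply]
    simp
  have hψ0inr : ψ0 ∘ₗ LinearMap.inr A F' F'' = -F''.subtype := by
    ext x
    rw [LinearMap.comp_apply, hψ0apply]
    simp
  have hrψ0 : LinearMap.range (ψ0.baseChange K) =
      LinearMap.range (F'.subtype.baseChange K) ⊔ LinearMap.range (F''.subtype.baseChange K) := by
    apply le_antisymm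
    · rintro _ ⟨z, rfl⟩
      have hz : ψ0.baseChange K z = F'.subtype.baseChange K
          ((LinearMap.fst A F' F'').baseChange K z)
          - F''.subtype.baseChange K ((LinearMap.snd A F' F'').baseChange K z) := by
        rw [← LinearMap.comp_apply, ← LinearMap.comp_apply, ← LinearMap.baseChange_comp,
          ← LinearMap.baseChange_comp, ← LinearMap.sub_apply, ← LinearMap.baseChange_sub, ← hψ0]
      rw [hz]
      exact Submodule.sub_mem _ (Submodule.mem_sup_left ⟨_, rfl⟩)
        (Submodule.mem_sup_right ⟨_, rfl⟩)
    · apply sup_le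
      · rintro _ ⟨z, rfl⟩
        refine ⟨(LinearMap.inl A F' F'').baseChange K z, ?_⟩
        rw [← LinearMap.comp_apply, ← LinearMap.baseChange_comp, hψ0inl]
      · rintro _ ⟨z, rfl⟩
        refine ⟨-((LinearMap.inr A F' F'').baseChange K z), ?_⟩
        rw [map_neg, ← LinearMap.comp_apply, ← LinearMap.baseChange_comp, hψ0inr,
          LinearMap.baseChange_neg]
        simp
  -- finrank identities
  have a1 : Module.finrank K (LinearMap.range (F'.subtype.baseChange K)) =
      Module.finrank K (K ⊗[A] F') := LinearMap.finrank_range_of_inj inj_i'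
  have a2 : Module.finrank K (LinearMap.range (F''.subtype.baseChange K)) =
      Module.finrank K (K ⊗[A] F'') := LinearMap.finrank_range_of_inj inj_i''
  have a3 : Module.finrank K (LinearMap.range (S.subtype.baseChange K)) =
      Module.finrank K (K ⊗[A] S) := LinearMap.finrank_range_of_inj inj_iS
  have a4 : Module.finrank K (LinearMap.range (D.subtype.baseChange K)) =
      Module.finrank K (K ⊗[A] D) := LinearMap.finrank_range_of_inj inj_iD
  have a5 := Submodule.finrank_sup_add_finrank_inf_eq
    (LinearMap.range (F'.subtype.baseChange K)) (LinearMap.range (F''.subtype.baseChange K))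
  have hsupr : Module.finrank K
      ((LinearMap.range (F'.subtype.baseChange K)) ⊔ (LinearMap.range (F''.subtype.baseChange K))
        : Submodule K (K ⊗[A] F)) = Module.finrank K (K ⊗[A] S) := by
    rw [← hrψ0, ← hrS, a3]
  rw [hsupr] at a5
  -- conclude equality of ranges
  have hle : LinearMap.range (D.subtype.baseChange K) ≤
      LinearMap.range (F'.subtype.baseChange K) ⊓ LinearMap.range (F''.subtype.baseChange K) := by
    refine le_inf ?_ ?_
    · rintro _ ⟨z, rfl⟩
      refine ⟨(Submodule.inclusion (inf_le_left : D ≤ F')).baseChange K z, ?_⟩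
      rw [← LinearMap.comp_apply, ← LinearMap.baseChange_comp, hsub']
    · rintro _ ⟨z, rfl⟩
      refine ⟨(Submodule.inclusion (inf_le_right : D ≤ F'')).baseChange K z, ?_⟩
      rw [← LinearMap.comp_apply, ← LinearMap.baseChange_comp, hsub'']
  have hfr : Module.finrank K
      ((LinearMap.range (F'.subtype.baseChange K)) ⊓ (LinearMap.range (F''.subtype.baseChange K))
        : Submodule K (K ⊗[A] F)) ≤
      Module.finrank K (LinearMap.range (D.subtype.baseChange K)) := by
    omega
  exact Submodule.eq_of_le_of_finrank_le hle hfr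
end

section
/- Let A be a commutative integral domain, F a finitely generated projective A-module, and F', F'' direct summands of F such that for every prime p of A the module F'_p + F''_p is a direct summand of F_p. Then F'∩F'' is a projective A-module and is a direct summand of F. -/
open TensorProduct

section Helpers

variable {R M : Type*} [CommRing R] [AddCommGroup M] [Module R M]

/-- A direct summand of a projective module is projective. -/
lemma aux_projOfCompl [Module.Projective R M] {p q : Submodule R M} (h : IsCompl p q) :
    Module.Projective R p :=
  Module.Projective.of_split p.subtype (p.linearProjOfIsCompl q h)
    (by ext x; exact congrArg Subtype.val (Submodule.linearProjOfIsCompl_apply_left h x))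

/-- If the range of `f` is projective, then the kernel of `f` is a direct summand. -/
lemma aux_split_ker {N : Type*} [AddCommGroup N] [Module R N] (f : M →ₗ[R] N)
    (hproj : Module.Projective R (LinearMap.range f)) :
    ∃ C : Submodule R M, IsCompl (LinearMap.ker f) C := by
  obtain ⟨s, hs⟩ := Module.projective_lifting_property f.rangeRestrict LinearMap.id
    f.surjective_rangeRestrict
  have hmem : ∀ x : M, x - s (f.rangeRestrict x) ∈ LinearMap.ker f := by
    intro x
    have h1 := LinearMap.congr_fun hs (f.rangeRestrict x)
    have h2 : f (s (f.rangeRestrict x)) = f x := by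
      simpa using congrArg Subtype.val h1
    simp [LinearMap.mem_ker, map_sub, h2]
  let g : M →ₗ[R] LinearMap.ker f :=
    (LinearMap.id - s ∘ₗ f.rangeRestrict).codRestrict (LinearMap.ker f) hmem
  refine ⟨LinearMap.ker g, LinearMap.isCompl_of_proj ?_⟩
  intro x
  apply Subtype.ext
  have hx : f.rangeRestrict (x : M) = 0 := by
    apply Subtype.ext
    simp [x.2]
  show (x : M) - s (f.rangeRestrict (x : M)) = (x : M)
  rw [hx, map_zero, sub_zero]

/-- If `M ⧸ S` is projective then `S` is a direct summand. -/
lemma aux_complOfProjQuot {S : Submodule R M} (hproj : Module.Projective R (M ⧸ S)) :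
    ∃ N : Submodule R M, IsCompl S N := by
  have hr : Module.Projective R (LinearMap.range S.mkQ) := by
    have : LinearMap.range S.mkQ = ⊤ := Submodule.range_mkQ S
    exact Module.Projective.of_equiv (this ▸ Submodule.topEquiv.symm)
  obtain ⟨C, hC⟩ := aux_split_ker S.mkQ hr
  rw [Submodule.ker_mkQ] at hC
  exact ⟨C, hC⟩

/-- Transfer projectivity over a localized ring along an `R`-linear equivalence. -/
lemma aux_projTransfer {A M' : Type*} [CommRing A] [Algebra R A] (S : Submonoid R)
    [IsLocalization S A] [Module A M] [IsScalarTower R A M]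
    [AddCommGroup M'] [Module R M'] [Module A M'] [IsScalarTower R A M']
    (e : M ≃ₗ[R] M') [Module.Projective A M] : Module.Projective A M' :=
  Module.Projective.of_split (LinearMap.extendScalarsOfIsLocalization S A e.symm.toLinearMap)
    (LinearMap.extendScalarsOfIsLocalization S A e.toLinearMap)
    (by ext x; simp)

end Helpers

/-- if `F'`, `F''` are direct summands of a finitely generated projective
module `F` over a domain `A` such that `F'_p + F''_p` is a direct summand of `F_p` for
every prime `p`, then `F' ∩ F''` is projective and a direct summand of `F`. -/
theorem stmt4 (A : Type*) [CommRing A] [IsDomain A]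
    (F : Type*) [AddCommGroup F] [Module A F]
    [Module.Finite A F] [Module.Projective A F]
    (F' F'' : Submodule A F)
    (h' : ∃ N : Submodule A F, IsCompl F' N)
    (h'' : ∃ N : Submodule A F, IsCompl F'' N)
    (hp : ∀ p : PrimeSpectrum A,
      ∃ N : Submodule (Localization.AtPrime p.asIdeal)
          (LocalizedModule p.asIdeal.primeCompl F),
        IsCompl ((F' ⊔ F'').localized p.asIdeal.primeCompl) N) :
    Module.Projective A ↥(F' ⊓ F'') ∧ ∃ N : Submodule A F, IsCompl (F' ⊓ F'') N := by
  classical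
  obtain ⟨N', hN'⟩ := h'
  obtain ⟨N'', hN''⟩ := h''
  set S : Submodule A F := F' ⊔ F'' with hSdef
  have hF'S : F' ≤ S := le_sup_left
  have hF''S : F'' ≤ S := le_sup_right
  -- S is finitely generated
  have fg' : F'.FG := Module.Finite.iff_fg.mp
    (Module.Finite.of_surjective (F'.linearProjOfIsCompl N' hN')
      (fun y => ⟨y, Submodule.linearProjOfIsCompl_apply_left hN' y⟩))
  have fg'' : F''.FG := Module.Finite.iff_fg.mp
    (Module.Finite.of_surjective (F''.linearProjOfIsCompl N'' hN'')
      (fun y => ⟨y, Submodule.linearProjOfIsCompl_apply_left hN'' y⟩))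
  have fgS : S.FG := fg'.sup fg''
  -- F ⧸ S is finitely presented
  have fpF : Module.FinitePresentation A F := Module.finitePresentation_of_projective A F
  have fpQ : Module.FinitePresentation A (F ⧸ S) :=
    Module.finitePresentation_of_surjective S.mkQ (Submodule.mkQ_surjective S)
      (by rwa [Submodule.ker_mkQ])
  -- F ⧸ S is locally projective
  have hloc : ∀ (I : Ideal A) (_ : I.IsMaximal),
      Module.Projective (Localization.AtPrime I) (LocalizedModule I.primeCompl (F ⧸ S)) := by
    intro I hI
    obtain ⟨N, hN⟩ := hp ⟨I, hI.isPrime⟩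
    haveI : Module.Projective (Localization.AtPrime I) (LocalizedModule I.primeCompl F) :=
      Module.projective_of_isLocalizedModule I.primeCompl
        (LocalizedModule.mkLinearMap I.primeCompl F)
    haveI : Module.Projective (Localization.AtPrime I) N := aux_projOfCompl hN.symm
    haveI : Module.Projective (Localization.AtPrime I)
        (LocalizedModule I.primeCompl F ⧸ S.localized I.primeCompl) :=
      Module.Projective.of_equiv (Submodule.quotientEquivOfIsCompl _ _ hN).symm
    exact aux_projTransfer I.primeCompl
      (IsLocalizedModule.linearEquiv I.primeCompl (S.toLocalizedQuotient I.primeCompl)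
        (LocalizedModule.mkLinearMap I.primeCompl (F ⧸ S)))
  haveI projQ : Module.Projective A (F ⧸ S) := Module.projective_of_localization_maximal hloc
  -- S is a direct summand
  obtain ⟨NS, hNS⟩ := aux_complOfProjQuot projQ
  have hS2 : F'' ⊔ N'' ⊓ S = S := by
    rw [← sup_inf_assoc_of_le N'' hF''S, codisjoint_iff.mp hN''.codisjoint, top_inf_eq]
  -- W := N'' ⊓ S is a direct summand of F
  have hWcompl : IsCompl (N'' ⊓ S) (F'' ⊔ NS) := by
    have hSinf : S ⊓ (F'' ⊔ NS) = F'' := by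
      rw [inf_comm, sup_inf_assoc_of_le NS hF''S, disjoint_iff.mp hNS.disjoint.symm, sup_bot_eq]
    constructor
    · rw [disjoint_iff, inf_assoc, hSinf, inf_comm, disjoint_iff.mp hN''.disjoint]
    · rw [codisjoint_iff, ← sup_assoc, sup_comm (N'' ⊓ S) F'', hS2,
        codisjoint_iff.mp hNS.codisjoint]
  haveI projW : Module.Projective A ↥(N'' ⊓ S) := aux_projOfCompl hWcompl
  -- φ : F' → F ⧸ F''
  set φ : ↥F' →ₗ[A] F ⧸ F'' := F''.mkQ ∘ₗ F'.subtype with hφdef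
  set ψ : ↥(N'' ⊓ S) →ₗ[A] F ⧸ F'' := F''.mkQ ∘ₗ (N'' ⊓ S).subtype with hψdef
  have hmapF'' : F''.map F''.mkQ = ⊥ := by
    rw [Submodule.eq_bot_iff]
    rintro x ⟨y, hy, rfl⟩
    simpa using (Submodule.Quotient.mk_eq_zero F'').mpr hy
  have hrangeφ : LinearMap.range φ = F'.map F''.mkQ := by
    rw [hφdef, LinearMap.range_comp, Submodule.range_subtype]
  have hrangeψ : LinearMap.range ψ = (N'' ⊓ S).map F''.mkQ := by
    rw [hψdef, LinearMap.range_comp, Submodule.range_subtype]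
  have hrange_eq : LinearMap.range ψ = LinearMap.range φ := by
    have h1 : S.map F''.mkQ = F'.map F''.mkQ := by
      rw [hSdef, Submodule.map_sup, hmapF'', sup_bot_eq]
    have h2 : S.map F''.mkQ = (N'' ⊓ S).map F''.mkQ := by
      conv_lhs => rw [← hS2]
      rw [Submodule.map_sup, hmapF'', bot_sup_eq]
    rw [hrangeφ, hrangeψ, ← h2, h1]
  have hψinj : Function.Injective ψ := by
    rw [← LinearMap.ker_eq_bot, hψdef, LinearMap.ker_comp, Submodule.ker_mkQ,
      Submodule.eq_bot_iff]
    intro x hx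
    have hx' : (x : F) ∈ F'' ⊓ N'' := ⟨Submodule.mem_comap.mp hx, x.2.1⟩
    rw [disjoint_iff.mp hN''.disjoint] at hx'
    exact Subtype.ext hx'
  have projRange : Module.Projective A ↥(LinearMap.range φ) :=
    Module.Projective.of_equiv
      ((LinearEquiv.ofInjective ψ hψinj).trans (LinearEquiv.ofEq _ _ hrange_eq))
  obtain ⟨C₀, hC₀⟩ := aux_split_ker φ projRange
  have hkerφ : LinearMap.ker φ = Submodule.comap F'.subtype F'' := by
    rw [hφdef, LinearMap.ker_comp, Submodule.ker_mkQ]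
  set C : Submodule A F := C₀.map F'.subtype with hCdef
  have hCle : C ≤ F' := Submodule.map_subtype_le _ _
  have hsup : (F' ⊓ F'') ⊔ C = F' := by
    have h := congrArg (Submodule.map F'.subtype) (codisjoint_iff.mp hC₀.codisjoint)
    rwa [Submodule.map_sup, hkerφ, Submodule.map_comap_subtype, Submodule.map_top,
      Submodule.range_subtype] at h
  have hinf : (F' ⊓ F'') ⊓ C = ⊥ := by
    have h := congrArg (Submodule.map F'.subtype) (disjoint_iff.mp hC₀.disjoint)
    rwa [Submodule.map_inf _ (Submodule.injective_subtype F'), hkerφ,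
      Submodule.map_comap_subtype, Submodule.map_bot] at h
  have hFC : F'' ⊓ C = ⊥ := by
    rw [eq_bot_iff]
    exact (le_inf (le_inf (inf_le_right.trans hCle) inf_le_left) inf_le_right).trans hinf.le
  have hCN' : F' ⊓ (C ⊔ N') = C := by
    rw [inf_comm, sup_inf_assoc_of_le N' hCle, disjoint_iff.mp hN'.disjoint.symm, sup_bot_eq]
  have hfinal : IsCompl (F' ⊓ F'') (C ⊔ N') := by
    constructor
    · rw [disjoint_iff, inf_comm F' F'', inf_assoc, hCN', hFC]
    · rw [codisjoint_iff, ← sup_assoc, hsup, codisjoint_iff.mp hN'.codisjoint]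
  exact ⟨aux_projOfCompl hfinal, ⟨C ⊔ N', hfinal⟩⟩
end

section
/- Let A be a commutative ring of prime characteristic p, D a derivation of A, and f ∈ A. Then (fD)^p = f^p·D^p + ((fD)^{p-1}(f))·D as derivations of A (Hochschild's formula). -/
/-!
Write `(f • D)ⁿ = ∑ᵢ cₙᵢ • Dⁱ`, where the coefficients `cₙᵢ ∈ A` obey a Leibniz-type recursion;
it gives `cₚ₀ = 0`, `cₚₚ = fᵖ` and `cₚ₁ = (fD)ᵖ⁻¹(f)` directly. The middle coefficients vanish
because `(fD)ᵖ` is again a derivation in characteristic `p`: extend `D` to `A[X]` by `X' = 1`,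
so that `(fD)ᵖ(Xⁱ) = i Xⁱ⁻¹ (fD)ᵖ(X)` has no constant term for `i ≥ 2`, while expanding it gives
the constant term `i! cₚᵢ`, and `i!` is a unit for `i < p`.
-/

open Finset Polynomial

namespace Derivation

variable {R A : Type*} [CommSemiring R] [CommRing A] [Algebra R A]

theorem iterate_map_mul (D : Derivation R A A) (n : ℕ) (a b : A) :
    D^[n] (a * b) = ∑ ij ∈ antidiagonal n, n.choose ij.1 • (D^[ij.1] a * D^[ij.2] b) := by
  induction n with
  | zero => simp
  | succ n ih =>
    rw [sum_antidiagonal_choose_succ_nsmul (fun i j => D^[i] a * D^[j] b) n]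
    simp only [Function.iterate_succ_apply', ih, map_sum, map_nsmul, leibniz, smul_eq_mul,
      smul_add, sum_add_distrib]
    congr 1
    refine sum_congr rfl fun ⟨i, j⟩ hij => ?_
    rw [n.choose_symm_of_eq_add (mem_antidiagonal.1 hij).symm, mul_comm]

theorem iterate_prime_map_mul (D : Derivation R A A) (p : ℕ) [hp : Fact p.Prime] [CharP A p]
    (a b : A) : D^[p] (a * b) = a • D^[p] b + b • D^[p] a := by
  rw [iterate_map_mul, sum_eq_add_of_mem (0, p) (p, 0) (by simp) (by simp)
    (by simp [hp.out.ne_zero])]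
  · simp [mul_comm]
  · rintro ⟨i, j⟩ hij ⟨hi0, hip⟩
    have hij := mem_antidiagonal.1 hij
    have hi0 : i ≠ 0 := by rintro rfl; simp_all
    have hip : i < p := by
      refine lt_of_le_of_ne (by omega) fun h => ?_
      subst h; simp_all
    rw [nsmul_eq_mul, (CharP.cast_eq_zero_iff A p _).2 (hp.out.dvd_choose_self hi0 hip), zero_mul]

def iteratePrime (D : Derivation R A A) (p : ℕ) [Fact p.Prime] [CharP A p] :
    Derivation R A A :=
  mk' (D.toLinearMap ^ p) fun a b => by
    simpa [Module.End.pow_apply] using D.iterate_prime_map_mul p a b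

@[simp]
theorem coe_iteratePrime (D : Derivation R A A) (p : ℕ) [Fact p.Prime] [CharP A p] :
    ⇑(D.iteratePrime p) = (⇑D)^[p] := by
  ext; simp [iteratePrime, Module.End.pow_apply]

theorem iterate_pow_of_apply_eq_one (D : Derivation R A A) {x : A} (hx : D x = 1) (i j : ℕ) :
    D^[j] (x ^ i) = (i.descFactorial j : A) * x ^ (i - j) := by
  induction j with
  | zero => simp
  | succ j ih =>
    rw [Function.iterate_succ_apply', ih, leibniz, leibniz_pow, hx, map_natCast,
      Nat.descFactorial_succ, Nat.sub_sub]
    simp only [smul_eq_mul, nsmul_eq_mul, Nat.cast_mul, mul_one]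
    ring

end Derivation

section

variable {A : Type*} [CommRing A]

/-- The coefficients of `(f • D)^[n] = ∑ i, smulIterateCoeff f D n i * D^[i]`. -/
def smulIterateCoeff (f : A) (D : A → A) : ℕ → ℕ → A
  | 0, 0 => 1
  | 0, _ + 1 => 0
  | n + 1, 0 => f * D (smulIterateCoeff f D n 0)
  | n + 1, i + 1 => f * D (smulIterateCoeff f D n (i + 1)) + f * smulIterateCoeff f D n i

theorem map_smulIterateCoeff {B : Type*} [CommRing B] (φ : A →+* B) (f : A) {D : A → A}
    {D' : B → B} (hD : ∀ a, φ (D a) = D' (φ a)) (n i : ℕ) :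
    φ (smulIterateCoeff f D n i) = smulIterateCoeff (φ f) D' n i := by
  induction n generalizing i with
  | zero => cases i <;> simp [smulIterateCoeff]
  | succ n ih => cases i <;> simp [smulIterateCoeff, hD, ih]

variable {R : Type*} [CommSemiring R] [Algebra R A] (f : A) (D : Derivation R A A)

theorem smulIterateCoeff_of_lt {n i : ℕ} (h : n < i) : smulIterateCoeff f D n i = 0 := by
  induction n generalizing i with
  | zero => obtain ⟨i, rfl⟩ := Nat.exists_eq_add_one_of_ne_zero (by omega : i ≠ 0); rfl
  | succ n ih =>
    obtain ⟨i, rfl⟩ := Nat.exists_eq_add_one_of_ne_zero (by omega : i ≠ 0)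
    simp [smulIterateCoeff, ih (by omega : n < i), ih (by omega : n < i + 1)]

@[simp]
theorem smulIterateCoeff_succ_zero (n : ℕ) : smulIterateCoeff f D (n + 1) 0 = 0 := by
  induction n with
  | zero => simp [smulIterateCoeff]
  | succ n ih => rw [smulIterateCoeff, ih, map_zero, mul_zero]

theorem smulIterateCoeff_self (n : ℕ) : smulIterateCoeff f D n n = f ^ n := by
  induction n with
  | zero => simp [smulIterateCoeff]
  | succ n ih => simp [smulIterateCoeff, smulIterateCoeff_of_lt, ih, pow_succ, mul_comm]

theorem smulIterateCoeff_succ_one (n : ℕ) :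
    smulIterateCoeff f D (n + 1) 1 = (⇑(f • D))^[n] f := by
  induction n with
  | zero => simp [smulIterateCoeff]
  | succ n ih =>
    rw [smulIterateCoeff, ih, smulIterateCoeff_succ_zero, mul_zero, add_zero,
      Function.iterate_succ_apply', Derivation.smul_apply, smul_eq_mul]

theorem iterate_smul_derivation_apply (n : ℕ) (x : A) :
    (⇑(f • D))^[n] x = ∑ i ∈ range (n + 1), smulIterateCoeff f D n i * D^[i] x := by
  induction n with
  | zero => simp [smulIterateCoeff]
  | succ n ih =>
    rw [Function.iterate_succ_apply', ih, Derivation.smul_apply, smul_eq_mul, map_sum, mul_sum,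
      sum_range_succ' _ (n + 1), smulIterateCoeff_succ_zero, zero_mul, add_zero]
    have hD0 : D (smulIterateCoeff f D n 0) = 0 := by
      cases n with
      | zero => simp [smulIterateCoeff]
      | succ n => simp
    have hshift : ∑ i ∈ range (n + 1), f * (D^[i] x * D (smulIterateCoeff f D n i)) =
        ∑ i ∈ range (n + 1), f * D (smulIterateCoeff f D n (i + 1)) * D (D^[i] x) := by
      rw [sum_range_succ', sum_range_succ, smulIterateCoeff_of_lt f D (Nat.lt_succ_self n)]
      simp [hD0, Function.iterate_succ_apply', mul_comm, mul_assoc]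
    simp only [smulIterateCoeff, Derivation.leibniz, smul_eq_mul, mul_add, add_mul, sum_add_distrib,
      Function.iterate_succ_apply']
    rw [add_comm, hshift]
    simp only [mul_assoc]

theorem smulIterateCoeff_eq_zero (p : ℕ) [Fact p.Prime] [CharP A p] {i : ℕ} (h2 : 2 ≤ i)
    (hi : i < p) : smulIterateCoeff f D p i = 0 := by
  let _ : Differential A := ⟨D.restrictScalars ℤ⟩
  set D' : Derivation ℤ A[X] A[X] := Differential.implicitDeriv 1
  have hD' : ∀ a, C (D a) = D' (C a) := fun a => (Differential.implicitDeriv_C 1 a).symm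
  have hX : D' X = 1 := Differential.implicitDeriv_X 1
  have key := congrArg (eval 0) (((C f • D').iteratePrime p).leibniz_pow X i)
  rw [Derivation.coe_iteratePrime, iterate_smul_derivation_apply] at key
  simp only [← map_smulIterateCoeff C f hD', D'.iterate_pow_of_apply_eq_one hX] at key
  rw [eval_finsetSum, sum_eq_single_of_mem i (mem_range.2 (by omega))] at key
  · have hunit : IsUnit (i.factorial : A) := (IsUnit.natCast_factorial_iff_of_charP p).2 hi
    simpa [Nat.descFactorial_self, zero_pow (by omega : i - 1 ≠ 0), hunit.mul_left_eq_zero] using key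
  · intro j _ hji
    rcases lt_or_gt_of_ne hji with hj | hj
    · simp [zero_pow (by omega : i - j ≠ 0)]
    · simp [Nat.descFactorial_eq_zero_iff_lt.2 hj]

theorem iterate_smul_derivation_prime_apply (p : ℕ) [hp : Fact p.Prime] [CharP A p] (x : A) :
    (⇑(f • D))^[p] x = f ^ p * D^[p] x + (⇑(f • D))^[p - 1] f * D x := by
  have hp2 := hp.out.two_le
  rw [iterate_smul_derivation_apply, sum_eq_add_of_mem p 1 (mem_range.2 (by omega))
    (mem_range.2 (by omega)) (by omega),
    smulIterateCoeff_self, ← smulIterateCoeff_succ_one, Nat.sub_add_cancel hp.out.one_le,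
    Function.iterate_one]
  intro i hi ⟨hip, hi1⟩
  obtain rfl | h2 : i = 0 ∨ 2 ≤ i := by omega
  · rw [← Nat.sub_add_cancel hp.out.one_le, smulIterateCoeff_succ_zero, zero_mul]
  · rw [smulIterateCoeff_eq_zero f D p h2 (by simp at hi; omega), zero_mul]

end

/-- Hochschild's formula: over a commutative ring `A` of prime
characteristic `p`, for a derivation `D` of `A` and `f ∈ A`,
`(fD)^p = f^p·D^p + ((fD)^{p-1}(f))·D`, as an identity of additive endomorphisms
(in characteristic `p` all three terms are again derivations). -/
theorem stmt6 (R A : Type*) [CommRing R] [CommRing A] [Algebra R A]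
    (p : ℕ) [hp : Fact p.Prime] [CharP A p]
    (D : Derivation R A A) (f : A) :
    ((f • D).toLinearMap) ^ p =
      f ^ p • (D.toLinearMap ^ p) + ((((f • D).toLinearMap) ^ (p - 1)) f) • D.toLinearMap := by
  ext x
  simpa [Module.End.pow_apply] using iterate_smul_derivation_prime_apply f D p x
end

section
/- Let A be a commutative ring of prime characteristic p and L an A-submodule of Der(A) that is closed under the Lie bracket and under p-th powers (a restricted Lie subalgebra). Suppose L is a free A-module with a basis D_1,…,D_c and there exist a_1,…,a_c ∈ A with D_i(a_l) = δ_{il} for all i,l. Then [D_i, D_j] = 0 and D_i^p = 0 for all i, j. -/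
/-- let `A` be a commutative ring of characteristic `p`, `L ⊆ Der(A)` an
`A`-submodule closed under the Lie bracket and under `p`-th powers, free over `A` with a
basis `D_1, …, D_c`, and suppose there are `a_1, …, a_c ∈ A` with `D_i a_l = δ_{il}`.
Then `[D_i, D_j] = 0` and `D_i^p = 0` for all `i, j`. -/
theorem stmt7 (R A : Type*) [CommRing R] [CommRing A] [Algebra R A]
    (p : ℕ) [hp : Fact p.Prime] [CharP A p]
    (L : Submodule A (Derivation R A A))
    (hbracket : ∀ D ∈ L, ∀ D' ∈ L, ⁅D, D'⁆ ∈ L)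
    (hpow : ∀ D ∈ L, ∃ E ∈ L, E.toLinearMap = D.toLinearMap ^ p)
    (c : ℕ) (B : Module.Basis (Fin c) A L)
    (D : Fin c → Derivation R A A) (hD : ∀ i, (B i : Derivation R A A) = D i)
    (a : Fin c → A)
    (hdual : ∀ i l, D i (a l) = if i = l then 1 else 0) :
    (∀ i j, ⁅D i, D j⁆ = 0) ∧ ∀ i, (D i).toLinearMap ^ p = 0 := by
  have hDL : ∀ i, D i ∈ L := fun i => hD i ▸ (B i).2
  -- key: any element of L killing all a_l is zero
  have key : ∀ E, E ∈ L → (∀ l, E (a l) = 0) → E = 0 := by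
    intro E hE h0
    have hrep := B.sum_repr ⟨E, hE⟩
    have hcoe : (∑ i, B.repr ⟨E, hE⟩ i • (D i)) = E := by
      have := congrArg (Subtype.val) hrep
      simp only [← hD]
      simpa only [Submodule.coe_sum, Submodule.coe_smul] using this
    have hsum : ∀ (f : Fin c → Derivation R A A) (x : A),
        (∑ i, f i) x = ∑ i, f i x := by
      intro f x
      exact map_sum (⟨⟨fun d : Derivation R A A => d x, rfl⟩, fun _ _ => rfl⟩ :
        Derivation R A A →+ A) f Finset.univ
    have hc : ∀ l, B.repr ⟨E, hE⟩ l = 0 := by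
      intro l
      have h := congrArg (fun d : Derivation R A A => d (a l)) hcoe
      simp only [hsum] at h
      have heval : ∀ i, (B.repr ⟨E, hE⟩ i • D i) (a l)
          = B.repr ⟨E, hE⟩ i • (D i (a l)) := fun i => rfl
      simp only [heval, hdual, smul_eq_mul, mul_ite, mul_one, mul_zero,
        Finset.sum_ite_eq', Finset.mem_univ, if_true, h0 l] at h
      exact h
    have : (⟨E, hE⟩ : L) = 0 := by
      rw [← hrep]
      simp [hc]
    simpa using congrArg Subtype.val this
  constructor
  · intro i j
    refine key _ (hbracket _ (hDL i) _ (hDL j)) ?_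
    intro l
    have : ⁅D i, D j⁆ (a l) = D i (D j (a l)) - D j (D i (a l)) := rfl
    rw [this, hdual, hdual]
    split <;> split <;> simp
  · intro i
    obtain ⟨E, hEL, hEeq⟩ := hpow (D i) (hDL i)
    obtain ⟨q, hq⟩ : ∃ q, p = q + 2 := ⟨p - 2, by have := hp.out.two_le; omega⟩
    have hE0 : E = 0 := by
      refine key _ hEL ?_
      intro l
      have : E (a l) = ((D i).toLinearMap ^ p) (a l) := by
        rw [← hEeq]; rfl
      rw [this, hq, pow_succ, pow_succ]
      have h1 : (D i).toLinearMap (a l) = if i = l then 1 else 0 := hdual i l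
      simp only [Module.End.mul_apply, h1]
      split <;> simp
    rw [← hEeq, hE0]
    rfl
end

section
/- Let k be an algebraically closed field of characteristic p > 0, X an irreducible affine variety with A = k[X], and g a restricted Lie algebra acting on A by derivations such that every closed point x satisfies codim_g g_x = c (i.e. all points are g-regular). Let h ⊆ g be a restricted Lie subalgebra with g = h + g_x for at least one closed point x. Then A^g = A^h. -/
set_option linter.unusedSectionVars false


/-- The stabilizer `g_x` of an ideal `m ⊆ A` under an action `ρ` of a Lie algebra `g`
by derivations of `A`. -/
def lieStab {k A g : Type*} [CommRing k] [CommRing A] [Algebra k A]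
    [LieRing g] [LieAlgebra k g]
    (ρ : g →ₗ[k] Derivation k A A) (m : Ideal A) : Submodule k g where
  carrier := {D | ∀ a ∈ m, ρ D a ∈ m}
  add_mem' {D E} hD hE := fun a ha => by
    rw [map_add, Derivation.add_apply]
    exact Ideal.add_mem m (hD a ha) (hE a ha)
  zero_mem' := fun a ha => by simp
  smul_mem' c D hD := fun a ha => by
    rw [map_smul, Derivation.smul_apply]
    exact Submodule.smul_of_tower_mem m c (hD a ha)

section Aux

variable {k A : Type*} [Field k] [CommRing A] [Algebra k A]
variable {g : Type*} [LieRing g] [LieAlgebra k g]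

/-- Evaluation of the action at a fixed element of `A`, as a linear map in the
Lie algebra variable. -/
def evalAt (ρ : g →ₗ[k] Derivation k A A) (a : A) : g →ₗ[k] A where
  toFun D := ρ D a
  map_add' D E := by simp only [map_add, Derivation.add_apply]
  map_smul' μ D := by simp only [map_smul, Derivation.smul_apply, RingHom.id_apply]

@[simp] lemma evalAt_apply (ρ : g →ₗ[k] Derivation k A A) (a : A) (D : g) :
    evalAt ρ a D = ρ D a := rfl

/-- If the residue field of `m` is `k` itself, membership in the stabilizer of `m`
means that `ρ D` maps the whole of `A` into `m`. -/
lemma mem_lieStab_iff (ρ : g →ₗ[k] Derivation k A A) {m : Ideal A}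
    (hsurj : Function.Surjective (algebraMap k (A ⧸ m))) {D : g} :
    D ∈ lieStab ρ m ↔ ∀ a : A, ρ D a ∈ m := by
  constructor
  · intro hD a
    obtain ⟨l, hl⟩ := hsurj (Ideal.Quotient.mk m a)
    have hmem : a - algebraMap k A l ∈ m := by
      rw [← Ideal.Quotient.eq_zero_iff_mem, map_sub,
        show Ideal.Quotient.mk m (algebraMap k A l) = algebraMap k (A ⧸ m) l from
          (IsScalarTower.algebraMap_apply k A (A ⧸ m) l).symm ▸
            congrFun (congrArg _ (Ideal.Quotient.algebraMap_eq m).symm) _,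
        hl, sub_self]
    have : ρ D a = ρ D (a - algebraMap k A l) := by
      rw [map_sub, Derivation.map_algebraMap, sub_zero]
    rw [this]
    exact hD _ hmem
  · intro hD a _
    exact hD a

variable [IsAlgClosed k] [Algebra.FiniteType k A]

lemma quot_module_finite {m : Ideal A} (hm : m.IsMaximal) : Module.Finite k (A ⧸ m) := by
  haveI := hm
  letI : Field (A ⧸ m) := Ideal.Quotient.field m
  haveI : Algebra.FiniteType k (A ⧸ m) :=
    Algebra.FiniteType.of_surjective (Ideal.Quotient.mkₐ k m)
      (Ideal.Quotient.mkₐ_surjective k m)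
  exact finite_of_finite_type_of_isJacobsonRing k (A ⧸ m)

lemma quot_alg_surj {m : Ideal A} (hm : m.IsMaximal) :
    Function.Surjective (algebraMap k (A ⧸ m)) := by
  haveI := hm
  haveI := quot_module_finite (k := k) hm
  exact IsAlgClosed.algebraMap_bijective_of_isIntegral.2

/-- The quotient of `g` by the stabilizer of a maximal ideal is finite dimensional. -/
lemma finiteDimensional_quot_lieStab (ρ : g →ₗ[k] Derivation k A A)
    {m : Ideal A} (hm : m.IsMaximal) :
    FiniteDimensional k (g ⧸ lieStab ρ m) := by
  haveI := hm
  haveI : IsNoetherianRing A := Algebra.FiniteType.isNoetherianRing k A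
  haveI : Module.Finite k (A ⧸ m) := quot_module_finite (k := k) hm
  obtain ⟨S, hS⟩ : m.FG := IsNoetherian.noetherian m
  let Ψ : g →ₗ[k] (S → A ⧸ m) :=
    LinearMap.pi fun s : S =>
      (Ideal.Quotient.mkₐ k m).toLinearMap.comp (evalAt ρ (s : A))
  have hker : LinearMap.ker Ψ = lieStab ρ m := by
    ext D
    constructor
    · intro hD a ha
      rw [← hS] at ha
      refine Submodule.span_induction (p := fun x _ => ρ D x ∈ m) ?_ ?_ ?_ ?_ ha
      · intro x hx
        have : Ψ D ⟨x, hx⟩ = 0 := by rw [LinearMap.mem_ker.mp hD]; rfl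
        simpa [Ψ, Ideal.Quotient.eq_zero_iff_mem] using this
      · simp
      · intro x y _ _ hx hy
        rw [map_add]
        exact Ideal.add_mem m hx hy
      · intro r x hx hx'
        have hxm : x ∈ m := by rw [← hS]; exact hx
        rw [smul_eq_mul, Derivation.leibniz, smul_eq_mul, smul_eq_mul]
        exact Ideal.add_mem m (Ideal.mul_mem_left m r hx') (Ideal.mul_mem_right _ m hxm)
    · intro hD
      rw [LinearMap.mem_ker]
      funext s
      have : (s : A) ∈ m := hS ▸ Submodule.subset_span s.2
      simpa [Ψ, Ideal.Quotient.eq_zero_iff_mem] using hD _ this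
  haveI : FiniteDimensional k (LinearMap.range Ψ) := inferInstance
  exact Module.Finite.equiv
    (((Submodule.quotEquivOfEq _ _ hker.symm).trans (LinearMap.quotKerEquivRange Ψ))).symm

end Aux

/-- let `k` be algebraically closed of characteristic `p > 0`, `A` the
coordinate ring of an irreducible affine variety on which the restricted Lie algebra `g`
acts by derivations so that every closed point has `codim_g g_x = c`, and let `h ⊆ g` be
a restricted Lie subalgebra with `g = h + g_x` for at least one closed point `x`.
Then `A^g = A^h`. -/
theorem stmt16 (k : Type*) [Field k] [IsAlgClosed k]
    (p : ℕ) [hp : Fact p.Prime] [CharP k p]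
    (A : Type*) [CommRing A] [IsDomain A] [Algebra k A] [Algebra.FiniteType k A]
    (g : Type*) [LieRing g] [LieAlgebra k g]
    (pmap : g → g) (ρ : g →ₗ[k] Derivation k A A)
    (hρbracket : ∀ D E : g, ρ ⁅D, E⁆ = ⁅ρ D, ρ E⁆)
    (hρp : ∀ D : g, (ρ (pmap D)).toLinearMap = (ρ D).toLinearMap ^ p)
    (c : ℕ)
    (hreg : ∀ m : Ideal A, m.IsMaximal → Module.finrank k (g ⧸ lieStab ρ m) = c)
    (h : LieSubalgebra k g) (hhp : ∀ D ∈ h, pmap D ∈ h)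
    (hsum : ∃ m : Ideal A, m.IsMaximal ∧
      ∀ D : g, ∃ E ∈ h, D - E ∈ lieStab ρ m) :
    {a : A | ∀ D : g, ρ D a = 0} = {a : A | ∀ D ∈ h, ρ D a = 0} := by
  apply Set.eq_of_subset_of_subset
  · intro a ha D _
    exact ha D
  intro a ha D
  simp only [Set.mem_setOf_eq] at ha ⊢
  obtain ⟨m, hm, hspan⟩ := hsum
  haveI := hm
  have surjm : Function.Surjective (algebraMap k (A ⧸ m)) := quot_alg_surj hm
  haveI : FiniteDimensional k (g ⧸ lieStab ρ m) := finiteDimensional_quot_lieStab ρ hm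
  -- a basis of `g ⧸ g_m` consisting of images of elements of `h`
  let bb : Module.Basis (Fin c) k (g ⧸ lieStab ρ m) :=
    Module.finBasisOfFinrankEq k _ (hreg m hm)
  have hEx : ∀ q : g ⧸ lieStab ρ m, ∃ E, E ∈ h ∧ (lieStab ρ m).mkQ E = q := by
    intro q
    obtain ⟨D₀, rfl⟩ := (lieStab ρ m).mkQ_surjective q
    obtain ⟨E, hEh, hst⟩ := hspan D₀
    refine ⟨E, hEh, ?_⟩
    have h0 : (lieStab ρ m).mkQ (D₀ - E) = 0 := by
      rw [Submodule.mkQ_apply, Submodule.Quotient.mk_eq_zero]; exact hst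
    rw [map_sub, sub_eq_zero] at h0
    exact h0.symm
  choose E hEh hEb using fun i => hEx (bb i)
  -- the evaluation map `Θ : A → (Fin c → A ⧸ m)` is surjective
  let Θ : A →ₗ[k] (Fin c → A ⧸ m) :=
    LinearMap.pi fun i =>
      (Ideal.Quotient.mkₐ k m).toLinearMap.comp (ρ (E i)).toLinearMap
  have hΘapp : ∀ (x : A) (i : Fin c), Θ x i = Ideal.Quotient.mk m (ρ (E i) x) := by
    intro x i; rfl
  -- identify `A ⧸ m` with `k`
  let κ : k ≃+* (A ⧸ m) :=
    RingEquiv.ofBijective (algebraMap k (A ⧸ m)) ⟨(algebraMap k (A ⧸ m)).injective, surjm⟩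
  have hκ : ∀ x : A ⧸ m, (κ.symm x : k) • (1 : A ⧸ m) = x := by
    intro x
    rw [Algebra.smul_def, mul_one]
    exact κ.apply_symm_apply x
  have hrepr : ∀ v : Fin c → A ⧸ m,
      v = ∑ i, κ.symm (v i) • (Pi.single i (1 : A ⧸ m) : Fin c → A ⧸ m) := by
    intro v
    funext j
    rw [Finset.sum_apply, Finset.sum_eq_single j]
    · rw [Pi.smul_apply, Pi.single_eq_same, hκ]
    · intro i _ hij
      rw [Pi.smul_apply, Pi.single_eq_of_ne (Ne.symm hij), smul_zero]
    · intro hj; exact absurd (Finset.mem_univ j) hj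
  have hΘsurj : Function.Surjective Θ := by
    by_contra hns
    rw [← LinearMap.range_eq_top] at hns
    obtain ⟨φ, φ0, hφ⟩ := (LinearMap.range Θ).exists_le_ker_of_lt_top (lt_top_iff_ne_top.mpr hns)
    set lam : Fin c → k := fun i => φ (Pi.single i (1 : A ⧸ m)) with hlam
    have hφv : ∀ v : Fin c → A ⧸ m, φ v = ∑ i, κ.symm (v i) * lam i := by
      intro v
      conv_lhs => rw [hrepr v]
      rw [map_sum]
      simp [smul_eq_mul]
      rfl
    set F : g := ∑ i, lam i • E i with hF
    have hFstab : F ∈ lieStab ρ m := by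
      intro x hx
      have h1 : Ideal.Quotient.mk m (ρ F x) = ∑ i, lam i • Θ x i := by
        have := map_sum (evalAt ρ x) (fun i => lam i • E i) Finset.univ
        rw [← hF] at this
        rw [evalAt_apply] at this
        rw [this, map_sum]
        refine Finset.sum_congr rfl fun i _ => ?_
        rw [map_smul, evalAt_apply]
        have : Ideal.Quotient.mk m (lam i • ρ (E i) x)
            = (Ideal.Quotient.mkₐ k m) (lam i • ρ (E i) x) := rfl
        rw [this, map_smul, Ideal.Quotient.mkₐ_eq_mk, hΘapp]
      have h2 : (∑ i, lam i • Θ x i) = algebraMap k (A ⧸ m) (φ (Θ x)) := by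
        rw [hφv (Θ x), map_sum]
        refine Finset.sum_congr rfl fun i _ => ?_
        conv_lhs => rw [← hκ (Θ x i)]
        rw [smul_smul, mul_comm, Algebra.algebraMap_eq_smul_one]
      have h3 : φ (Θ x) = 0 := hφ ⟨x, rfl⟩
      rw [h3, map_zero] at h2
      rw [h2] at h1
      exact Ideal.Quotient.eq_zero_iff_mem.mp h1
    have hπF : (lieStab ρ m).mkQ F = 0 := by
      rw [Submodule.mkQ_apply, Submodule.Quotient.mk_eq_zero]; exact hFstab
    have hlam0 : ∀ i, lam i = 0 := by
      have hsum0 : (∑ i, lam i • bb i) = 0 := by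
        rw [← hπF, hF, map_sum]
        refine Finset.sum_congr rfl fun i _ => ?_
        rw [map_smul, hEb]
      exact Fintype.linearIndependent_iff.mp bb.linearIndependent lam hsum0
    refine φ0 (LinearMap.ext fun v => ?_)
    rw [hφv v, LinearMap.zero_apply]
    simp [hlam0]
  choose u hu using fun j => hΘsurj (Pi.single j (1 : A ⧸ m))
  -- the determinant
  set M : Matrix (Fin c) (Fin c) A := Matrix.of fun i j => ρ (E i) (u j) with hM
  set d : A := M.det with hd
  have hmkd : Ideal.Quotient.mk m d = 1 := by
    have hmap : M.map (Ideal.Quotient.mk m) = 1 := by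
      ext i j
      rw [Matrix.map_apply, hM, Matrix.of_apply, ← hΘapp, hu, Matrix.one_apply, Pi.single_apply]
    rw [hd, RingHom.map_det, RingHom.mapMatrix_apply, hmap, Matrix.det_one]
  have hdm : d ∉ m := fun hdm => by
    rw [Ideal.Quotient.eq_zero_iff_mem.mpr hdm] at hmkd
    exact zero_ne_one hmkd
  -- key claim: at every maximal ideal avoiding d, ρ D a lands in the ideal
  have key : ∀ m' : Ideal A, m'.IsMaximal → d ∉ m' → ρ D a ∈ m' := by
    intro m' hm' hdm'
    haveI := hm'
    have surjm' : Function.Surjective (algebraMap k (A ⧸ m')) := quot_alg_surj hm'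
    haveI : FiniteDimensional k (g ⧸ lieStab ρ m') := finiteDimensional_quot_lieStab ρ hm'
    set π' := (lieStab ρ m').mkQ with hπ'
    set N : Matrix (Fin c) (Fin c) (A ⧸ m') := M.map (Ideal.Quotient.mk m') with hN
    have hNdet : IsUnit N.det := by
      rw [hN, ← RingHom.mapMatrix_apply, ← RingHom.map_det]
      have hne : Ideal.Quotient.mk m' M.det ≠ 0 := fun h0 =>
        hdm' (Ideal.Quotient.eq_zero_iff_mem.mp (hd ▸ h0))
      obtain ⟨b, hb⟩ := Ideal.Quotient.exists_inv hne
      exact IsUnit.of_mul_eq_one _ hb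
    have indep : LinearIndependent k fun i => π' (E i) := by
      rw [Fintype.linearIndependent_iff]
      intro lam hlam
      set F : g := ∑ i, lam i • E i with hF
      have hFstab : F ∈ lieStab ρ m' := by
        have : π' F = 0 := by
          rw [hF, map_sum]
          simpa only [map_smul] using hlam
        rw [Submodule.mkQ_apply, Submodule.Quotient.mk_eq_zero] at this
        exact this
      have hFall : ∀ x : A, ρ F x ∈ m' := (mem_lieStab_iff ρ surjm').mp hFstab
      set w : Fin c → A ⧸ m' := fun i => algebraMap k (A ⧸ m') (lam i) with hw
      have hvm : Matrix.vecMul w N = 0 := by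
        funext j
        have h1 : Ideal.Quotient.mk m' (ρ F (u j)) = 0 :=
          Ideal.Quotient.eq_zero_iff_mem.mpr (hFall (u j))
        have h2 : Ideal.Quotient.mk m' (ρ F (u j)) = ∑ i, w i * N i j := by
          have := map_sum (evalAt ρ (u j)) (fun i => lam i • E i) Finset.univ
          rw [← hF] at this
          rw [evalAt_apply] at this
          rw [this, map_sum]
          refine Finset.sum_congr rfl fun i _ => ?_
          rw [map_smul, evalAt_apply]
          have heq : Ideal.Quotient.mk m' (lam i • ρ (E i) (u j))
              = (Ideal.Quotient.mkₐ k m') (lam i • ρ (E i) (u j)) := rfl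
          rw [heq, map_smul, Ideal.Quotient.mkₐ_eq_mk, Algebra.smul_def]
          rfl
        rw [Matrix.vecMul, Pi.zero_apply]
        rw [h2] at h1
        rw [← h1]
        rfl
      have hw0 : w = 0 := by
        calc w = Matrix.vecMul w (1 : Matrix (Fin c) (Fin c) (A ⧸ m')) :=
              (Matrix.vecMul_one w).symm
        _ = Matrix.vecMul w (N * N⁻¹) := by rw [Matrix.mul_nonsing_inv N hNdet]
        _ = Matrix.vecMul (Matrix.vecMul w N) N⁻¹ := (Matrix.vecMul_vecMul w N N⁻¹).symm
        _ = Matrix.vecMul 0 N⁻¹ := by rw [hvm]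
        _ = 0 := Matrix.zero_vecMul _
      intro i
      have : algebraMap k (A ⧸ m') (lam i) = 0 := congrFun hw0 i
      exact (algebraMap k (A ⧸ m')).injective (by rw [this, map_zero])
    have hsp : Submodule.span k (Set.range fun i => π' (E i)) = ⊤ :=
      indep.span_eq_top_of_card_eq_finrank' (by simp [hreg m' hm'])
    have hmem : π' D ∈ Submodule.span k (Set.range fun i => π' (E i)) := by
      rw [hsp]; exact Submodule.mem_top
    obtain ⟨μ, hμ⟩ := (Submodule.mem_span_range_iff_exists_fun k).mp hmem
    set G : g := ∑ i, μ i • E i with hG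
    have hDG : D - G ∈ lieStab ρ m' := by
      have : π' (D - G) = 0 := by
        rw [map_sub, hG, map_sum, ← hμ]
        rw [sub_eq_zero]
        exact Finset.sum_congr rfl fun i _ => by rw [map_smul]
      rw [hπ', Submodule.mkQ_apply, Submodule.Quotient.mk_eq_zero] at this
      exact this
    have hGa : ρ G a = 0 := by
      have := map_sum (evalAt ρ a) (fun i => μ i • E i) Finset.univ
      rw [← hG, evalAt_apply] at this
      rw [this]
      refine Finset.sum_eq_zero fun i _ => ?_
      rw [map_smul, evalAt_apply, ha (E i) (hEh i), smul_zero]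
    have : ρ D a = ρ G a + ρ (D - G) a := by
      rw [← evalAt_apply ρ a, ← evalAt_apply ρ a G, ← evalAt_apply ρ a (D - G),
        ← map_add, add_sub_cancel]
    rw [this, hGa, zero_add]
    exact (mem_lieStab_iff ρ surjm').mp hDG a
  -- conclude via the Jacobson property
  haveI : IsJacobsonRing A := isJacobsonRing_of_finiteType (A := k)
  have hjac : d * ρ D a ∈ (⊥ : Ideal A).jacobson := by
    rw [Ideal.jacobson]
    refine Ideal.mem_sInf.mpr fun {J} hJ => ?_
    by_cases hdJ : d ∈ J
    · exact Ideal.mul_mem_right _ _ hdJ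
    · exact Ideal.mul_mem_left _ _ (key J hJ.2 hdJ)
  rw [IsJacobsonRing.out ‹_› (Ideal.bot_prime.isRadical)] at hjac
  have := Ideal.mem_bot.mp hjac
  rcases mul_eq_zero.mp this with h0 | h0
  · exact absurd (h0 ▸ m.zero_mem) hdm
  · exact h0
end

section
/- Let k be a field of characteristic p > 0 and K a field extension of k with subfields L_i = K^{(p^i)}(f_1,…,f_n) for fixed elements f_1,…,f_n ∈ K, where K^{(p^i)} = {a^{p^i} : a ∈ K}. Suppose the monomials f_1^{m_1}⋯f_n^{m_n} with 0 ≤ m_j < p are linearly independent over K^{(p)}. Then [L_i : K^{(p^i)}] = p^{n i} for every i ≥ 1. -/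
set_option maxHeartbeats 1000000
set_option synthInstance.maxHeartbeats 1000000

theorem aux_indep (K : Type*) [Field K]
    (p : ℕ) [hp : Fact p.Prime] [CharP K p] [ExpChar K p]
    (n : ℕ) (f : Fin n → K)
    (hindep : LinearIndependent ((frobenius K p).fieldRange)
      fun m : Fin n → Fin p => ∏ j, f j ^ (m j : ℕ)) :
    ∀ i : ℕ, ∀ c : (Fin n → Fin (p ^ i)) → K,
      (∀ m, c m ∈ (iterateFrobenius K p i).fieldRange) →
      ∑ m, c m * ∏ j, f j ^ (m j : ℕ) = 0 → ∀ m, c m = 0 := by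
  have hp2 : 2 ≤ p := hp.out.two_le
  have hindep' : ∀ g : (Fin n → Fin p) → K,
      (∀ a, g a ∈ (frobenius K p).fieldRange) →
      ∑ a, g a * ∏ j, f j ^ (a j : ℕ) = 0 → ∀ a, g a = 0 := by
    intro g hg hsum a
    rw [Fintype.linearIndependent_iff] at hindep
    have h0 : ∑ a, (⟨g a, hg a⟩ : (frobenius K p).fieldRange) •
        (∏ j, f j ^ (a j : ℕ)) = 0 := by
      exact hsum
    exact congrArg Subtype.val (hindep (fun a => ⟨g a, hg a⟩) h0 a)
  intro i
  induction i with
  | zero =>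
    intro c hc hsum m
    haveI : Subsingleton (Fin (p ^ 0)) := by rw [pow_zero]; infer_instance
    haveI : Subsingleton (Fin n → Fin (p ^ 0)) := inferInstance
    rw [Fintype.sum_eq_single m (fun b hb => absurd (Subsingleton.elim b m) hb)] at hsum
    have h1 : ∏ j, f j ^ ((m j : ℕ)) = 1 := by
      apply Finset.prod_eq_one
      intro j _
      have h3 : (m j : ℕ) = 0 :=
        Nat.lt_one_iff.mp (lt_of_lt_of_le (m j).2 (le_of_eq (pow_zero p)))
      simp [h3]
    rw [h1, mul_one] at hsum
    exact hsum
  | succ i ih =>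
    intro c hc hsum m
    let e : ((Fin n → Fin (p ^ i)) × (Fin n → Fin p)) ≃ (Fin n → Fin (p ^ (i + 1))) :=
      (Equiv.arrowProdEquivProdArrow (Fin n) (fun _ => Fin (p ^ i)) (fun _ => Fin p)).symm.trans
        (Equiv.piCongrRight fun _ => finProdFinEquiv)
    have he : ∀ (b : Fin n → Fin (p ^ i)) (a : Fin n → Fin p) (j : Fin n),
        ((e (b, a)) j : ℕ) = (a j : ℕ) + p * (b j : ℕ) := fun b a j => rfl
    have hM : ∀ (b : Fin n → Fin (p ^ i)) (a : Fin n → Fin p),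
        (∏ j, f j ^ ((e (b, a)) j : ℕ)) =
        (∏ j, f j ^ (a j : ℕ)) * (∏ j, f j ^ (b j : ℕ)) ^ p := by
      intro b a
      rw [← Finset.prod_pow, ← Finset.prod_mul_distrib]
      apply Finset.prod_congr rfl
      intro j _
      rw [he b a j, pow_add, mul_comm p ((b j : ℕ)), pow_mul]
    have hd : ∀ mm : Fin n → Fin (p ^ (i + 1)), ∃ d : K,
        d ∈ (iterateFrobenius K p i).fieldRange ∧ d ^ p = c mm := by
      intro mm
      obtain ⟨y, hy⟩ := hc mm
      refine ⟨y ^ p ^ i, ⟨y, iterateFrobenius_def p i y⟩, ?_⟩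
      rw [← pow_mul, ← pow_succ, ← iterateFrobenius_def, hy]
    choose d hdF hdp using hd
    -- the inner coefficients
    have hg : ∀ a : Fin n → Fin p,
        (∑ b : Fin n → Fin (p ^ i), c (e (b, a)) * (∏ j, f j ^ (b j : ℕ)) ^ p)
          ∈ (frobenius K p).fieldRange := by
      intro a
      apply Subfield.sum_mem
      intro b _
      apply Subfield.mul_mem
      · rw [← hdp (e (b, a))]
        exact ⟨d (e (b, a)), frobenius_def ..⟩
      · exact ⟨∏ j, f j ^ (b j : ℕ), frobenius_def ..⟩
    have hsum2 : ∑ a : Fin n → Fin p, (∑ b : Fin n → Fin (p ^ i),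
        c (e (b, a)) * (∏ j, f j ^ (b j : ℕ)) ^ p) * (∏ j, f j ^ (a j : ℕ)) = 0 := by
      rw [← hsum, ← Equiv.sum_comp e (fun mm => c mm * ∏ j, f j ^ (mm j : ℕ))]
      rw [Fintype.sum_prod_type, Finset.sum_comm]
      simp only [Finset.sum_mul]
      apply Finset.sum_congr rfl
      intro a _
      apply Finset.sum_congr rfl
      intro b _
      rw [hM b a]
      ring
    have hga : ∀ a, (∑ b : Fin n → Fin (p ^ i),
        c (e (b, a)) * (∏ j, f j ^ (b j : ℕ)) ^ p) = 0 := hindep' _ hg hsum2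
    obtain ⟨⟨b₀, a₀⟩, rfl⟩ := e.surjective m
    have h1 : ∑ b : Fin n → Fin (p ^ i), d (e (b, a₀)) * (∏ j, f j ^ (b j : ℕ)) = 0 := by
      apply frobenius_inj K p
      rw [map_sum, map_zero]
      rw [← hga a₀]
      apply Finset.sum_congr rfl
      intro b _
      rw [frobenius_def, mul_pow, hdp (e (b, a₀))]
    have h2 := ih (fun b => d (e (b, a₀))) (fun b => hdF (e (b, a₀))) h1 b₀
    rw [← hdp (e (b₀, a₀)), h2, zero_pow hp.out.ne_zero]

/-- let `K` be a field of characteristic `p > 0`, `f_1, …, f_n ∈ K`, and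
`L_i = K^{(p^i)}(f_1, …, f_n)` where `K^{(p^i)}` is the subfield of `p^i`-th powers.  If
the monomials `f_1^{m_1} ⋯ f_n^{m_n}` with `0 ≤ m_j < p` are linearly independent over
`K^{(p)}`, then `[L_i : K^{(p^i)}] = p^{n·i}` for every `i ≥ 1`. -/
theorem stmt18 (K : Type*) [Field K]
    (p : ℕ) [hp : Fact p.Prime] [CharP K p] [ExpChar K p]
    (n : ℕ) (f : Fin n → K)
    (hindep : LinearIndependent ((frobenius K p).fieldRange)
      fun m : Fin n → Fin p => ∏ j, f j ^ (m j : ℕ)) :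
    ∀ i : ℕ, 1 ≤ i →
      Module.finrank ((iterateFrobenius K p i).fieldRange)
        (IntermediateField.adjoin ((iterateFrobenius K p i).fieldRange) (Set.range f)) =
      p ^ (n * i) := by
  intro i hi
  set F := (iterateFrobenius K p i).fieldRange with hF
  set L := IntermediateField.adjoin F (Set.range f) with hL
  have hp2 : 2 ≤ p := hp.out.two_le
  have hpi : 1 < p ^ i := Nat.one_lt_pow (by omega) hp.out.one_lt
  have hpi0 : 0 < p ^ i := by omega
  have hpow_mem : ∀ x : K, x ^ p ^ i ∈ F := fun x => ⟨x, iterateFrobenius_def p i x⟩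
  have hmem : ∀ m : Fin n → Fin (p ^ i), (∏ j, f j ^ (m j : ℕ)) ∈ L := fun m =>
    prod_mem fun j _ => pow_mem (IntermediateField.subset_adjoin F (Set.range f) ⟨j, rfl⟩) _
  set v : (Fin n → Fin (p ^ i)) → L := fun m => ⟨∏ j, f j ^ (m j : ℕ), hmem m⟩ with hv
  -- linear independence
  have hli : LinearIndependent F v := by
    rw [Fintype.linearIndependent_iff]
    intro g hg mm
    have hK : ∑ m, (g m : K) * ∏ j, f j ^ (m j : ℕ) = 0 := by
      have h := congrArg L.val hg
      rw [map_sum, map_zero] at h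
      rw [← h]
      apply Finset.sum_congr rfl
      intro m _
      rw [map_smul]
      rfl
    exact Subtype.ext (aux_indep K p n f hindep i (fun m => (g m : K)) (fun m => (g m).2) hK mm)
  -- the span in K
  set S := Submodule.span F (Set.range fun m : Fin n → Fin (p ^ i) => ∏ j, f j ^ (m j : ℕ))
    with hS
  have hone : (1 : K) ∈ S := by
    apply Submodule.subset_span
    refine ⟨fun _ => ⟨0, hpi0⟩, ?_⟩
    simp
  have hMmul : ∀ m m' : Fin n → Fin (p ^ i),
      (∏ j, f j ^ (m j : ℕ)) * (∏ j, f j ^ (m' j : ℕ)) ∈ S := by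
    intro m m'
    have hr : ∀ j : Fin n, ((m j : ℕ) + (m' j : ℕ)) % p ^ i < p ^ i :=
      fun j => Nat.mod_lt _ hpi0
    set r : Fin n → Fin (p ^ i) := fun j => ⟨((m j : ℕ) + (m' j : ℕ)) % p ^ i, hr j⟩ with hrdef
    set q : Fin n → ℕ := fun j => ((m j : ℕ) + (m' j : ℕ)) / p ^ i with hq
    have key : (∏ j, f j ^ (m j : ℕ)) * (∏ j, f j ^ (m' j : ℕ))
        = ((∏ j, f j ^ q j) ^ p ^ i) * ∏ j, f j ^ (r j : ℕ) := by
      rw [← Finset.prod_mul_distrib, ← Finset.prod_pow, ← Finset.prod_mul_distrib]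
      apply Finset.prod_congr rfl
      intro j _
      rw [← pow_add, ← pow_mul, ← pow_add]
      congr 1
      show (m j : ℕ) + (m' j : ℕ) = q j * p ^ i + ((m j : ℕ) + (m' j : ℕ)) % p ^ i
      rw [hq, mul_comm]
      exact (Nat.div_add_mod _ _).symm
    rw [key]
    exact Submodule.smul_mem _ (⟨_, hpow_mem (∏ j, f j ^ q j)⟩ : F)
      (Submodule.subset_span ⟨r, rfl⟩)
  have hmul : ∀ x y : K, x ∈ S → y ∈ S → x * y ∈ S := by
    have hss : S * S ≤ S := by
      rw [hS, Submodule.span_mul_span, Submodule.span_le]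
      rintro z ⟨x, ⟨mx, rfl⟩, y, ⟨my, rfl⟩, rfl⟩
      exact hMmul mx my
    intro x y hx hy
    exact hss (Submodule.mul_mem_mul hx hy)
  have hfS : ∀ j : Fin n, f j ∈ S := by
    intro j
    have : f j = ∏ j', f j' ^
        (((fun j'' => if j'' = j then (⟨1, hpi⟩ : Fin (p ^ i)) else ⟨0, hpi0⟩) j' : ℕ)) := by
      rw [Finset.prod_eq_single j]
      · simp
      · intro b _ hb
        simp [hb]
      · intro h
        exact absurd (Finset.mem_univ j) h
    rw [this]
    exact Submodule.subset_span ⟨_, rfl⟩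
  have halg : ∀ x ∈ Set.range f, IsAlgebraic F x := by
    rintro x ⟨j, rfl⟩
    refine IsIntegral.isAlgebraic ?_
    refine IsIntegral.of_pow hpi0 ?_
    have h3 : IsIntegral F (algebraMap F K ⟨f j ^ p ^ i, hpow_mem (f j)⟩) :=
      isIntegral_algebraMap
    exact h3
  have hLS : (L : Set K) ⊆ S := by
    intro x hx
    have h1 : L.toSubalgebra = Algebra.adjoin F (Set.range f) :=
      IntermediateField.adjoin_toSubalgebra_of_isAlgebraic halg
    have h2 : Algebra.adjoin F (Set.range f) ≤ S.toSubalgebra hone hmul :=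
      Algebra.adjoin_le (by rintro z ⟨j, rfl⟩; exact hfS j)
    have hx' : x ∈ L.toSubalgebra := hx
    rw [h1] at hx'
    exact h2 hx'
  have hspan : ⊤ ≤ Submodule.span F (Set.range v) := by
    intro x _
    have hx : (x : K) ∈ S := hLS x.2
    have hmap : S ≤ Submodule.map L.val.toLinearMap (Submodule.span F (Set.range v)) := by
      rw [hS, Submodule.span_le]
      rintro z ⟨mz, rfl⟩
      exact ⟨v mz, Submodule.subset_span ⟨mz, rfl⟩, rfl⟩
    obtain ⟨y, hy, hyx⟩ := hmap hx
    have hxy : y = x := Subtype.ext hyx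
    rwa [← hxy]
  let B : Module.Basis (Fin n → Fin (p ^ i)) F L := Module.Basis.mk hli hspan
  rw [Module.finrank_eq_card_basis B, Fintype.card_fun, Fintype.card_fin, Fintype.card_fin,
    ← pow_mul, Nat.mul_comm]
end
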